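/- arXiv:1302.3200 — 5 statements merged into one kernel-verified Lean document; each statement's English description precedes it below -/
import Mathlib

section
/- There exists a constant C > 0 such that for every positive integer n, τ(n) ≤ C·n^(4/3); that is, the peeling process on the n × n integer grid terminates after O(n^(4/3)) iterations. -/
/-- Remove from `P` the extreme points (vertices) of its convex hull. -/
noncomputable def peel (P : Set (ℝ × ℝ)) : Set (ℝ × ℝ) :=
  P \ (convexHull ℝ P).extremePoints ℝ

/-- Number of peeling iterations until the set is empty. -/
noncomputable def tau (Q : Set (ℝ × ℝ)) : ℕ :=
  sInf {k : ℕ | peel^[k] Q = ∅}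

/-- The `n × n` integer grid `{1,…,n}²`, viewed in `ℝ²`. -/
def grid (n : ℕ) : Set (ℝ × ℝ) :=
  {p | ∃ a b : ℕ, 1 ≤ a ∧ a ≤ n ∧ 1 ≤ b ∧ b ≤ n ∧ p = ((a : ℝ), (b : ℝ))}

/-!
For a direction `v = (a, b)` with coprime `1 ≤ a, b ≤ M`, follow the minimum of
`⟨v, ·⟩ = a x + b y` over the current set. It is an integer in `[0, 2Mn]` that never decreases, so
it increases in at most `2Mn` rounds. In a round where it stalls, the leftmost point of the
minimizing face is a hull vertex, hence peeled, while some other point of that face survives.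
Such a dying point determines its round, and also its direction: the survivors for two
directions `v, w` lie to the right of it on the respective supporting lines, which forces
`v ∥ w`. So there are at most `n²` stalls in total, and with `#directions ≥ M²/3` every round
`K` before the end satisfies `K ≤ 2Mn + 3n²/M²`; take `M ≈ n^{1/3}`.
-/

open Finset

section ExtremePoints

variable {E : Type*} [AddCommGroup E] [Module ℝ E]

lemma convex_insert_setOf_lt (f : E →ₗ[ℝ] ℝ) (q : E) :
    Convex ℝ (insert q {y | f q < f y}) := by
  rw [convex_iff_forall_pos]
  rintro x hx y hy a b ha hb hab
  obtain rfl := eq_sub_of_add_eq hab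
  rcases hx with rfl | hx <;> rcases hy with rfl | hy
  · exact Or.inl (Convex.combo_self hab _)
  all_goals
    right
    simp only [Set.mem_ofPred_eq, map_add, map_smul, smul_eq_mul] at *
  · nlinarith [mul_pos hb (sub_pos.2 hy)]
  · nlinarith [mul_pos ha (sub_pos.2 hx)]
  · nlinarith [mul_pos hb (sub_pos.2 hy), mul_pos ha (sub_pos.2 hx)]

lemma mem_extremePoints_convexHull_of_forall_lt {A : Set E} (f : E →ₗ[ℝ] ℝ) {q : E}
    (hq : q ∈ A) (h : ∀ p ∈ A, p ≠ q → f q < f p) :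
    q ∈ (convexHull ℝ A).extremePoints ℝ := by
  have hT := convex_insert_setOf_lt f q
  have hAT : convexHull ℝ A ⊆ insert q {y | f q < f y} :=
    convexHull_min (fun p hp => (eq_or_ne p q).imp id (h p hp)) hT
  have hqT : q ∈ (insert q {y | f q < f y}).extremePoints ℝ := by
    rw [hT.mem_extremePoints_iff_convex_sdiff,
      Set.insert_sdiff_self_of_notMem (s := {y | f q < f y}) (lt_irrefl (f q))]
    exact ⟨Set.mem_insert q _, convex_halfSpace_gt f.isLinear _⟩
  exact inter_extremePoints_subset_extremePoints_of_subset hAT ⟨subset_convexHull ℝ A hq, hqT⟩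

end ExtremePoints

section Peeling

lemma peel_subset (P : Set (ℝ × ℝ)) : peel P ⊆ P := Set.sdiff_subset

lemma antitone_iterate_peel (Q : Set (ℝ × ℝ)) : Antitone fun r => peel^[r] Q :=
  antitone_nat_of_succ_le fun r => by
    rw [Function.iterate_succ_apply']
    exact peel_subset _

lemma iterate_peel_subset_of_le (Q : Set (ℝ × ℝ)) {r s : ℕ} (h : r ≤ s) :
    peel^[s] Q ⊆ peel^[r] Q :=
  antitone_iterate_peel Q h

lemma eq_of_mem_sdiff_succ {α : Type*} {A : ℕ → Set α} (hA : Antitone A) {x : α} {r s : ℕ}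
    (hr : x ∈ A r \ A (r + 1)) (hs : x ∈ A s \ A (s + 1)) : r = s := by
  by_contra hne
  rcases Nat.lt_or_gt_of_ne hne with h | h
  · exact hr.2 (hA h hs.1)
  · exact hs.2 (hA h hr.1)

lemma tau_le_of_forall_nonempty {Q : Set (ℝ × ℝ)} {B : ℝ} (hB : 0 ≤ B)
    (h : ∀ K, (peel^[K] Q).Nonempty → (K : ℝ) ≤ B) : (tau Q : ℝ) ≤ B + 1 := by
  have hempty : peel^[⌊B⌋₊ + 1] Q = ∅ := by
    by_contra hne
    have := h _ (Set.nonempty_iff_ne_empty.2 hne)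
    push_cast at this
    linarith [Nat.lt_floor_add_one B]
  calc (tau Q : ℝ) ≤ (⌊B⌋₊ + 1 : ℕ) := by exact_mod_cast Nat.sInf_le hempty
    _ ≤ B + 1 := by push_cast; linarith [Nat.floor_le hB]

end Peeling

noncomputable def dirForm (v : ℕ × ℕ) : ℝ × ℝ →ₗ[ℝ] ℝ :=
  (v.1 : ℝ) • LinearMap.fst ℝ ℝ ℝ + (v.2 : ℝ) • LinearMap.snd ℝ ℝ ℝ

@[simp]
lemma dirForm_apply (v : ℕ × ℕ) (p : ℝ × ℝ) : dirForm v p = v.1 * p.1 + v.2 * p.2 := rfl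

lemma eq_of_dirForm_eq_of_fst_eq {v : ℕ × ℕ} (hv : 0 < v.2) {p q : ℝ × ℝ}
    (h : dirForm v p = dirForm v q) (h₁ : p.1 = q.1) : p = q := by
  have hv' : (v.2 : ℝ) ≠ 0 := by positivity
  refine Prod.ext h₁ (mul_left_cancel₀ hv' ?_)
  simp only [dirForm_apply, h₁] at h
  linarith

section Grid

lemma grid_eq_image (n : ℕ) :
    grid n = ((Icc 1 n ×ˢ Icc 1 n).image fun ab : ℕ × ℕ => ((ab.1 : ℝ), (ab.2 : ℝ)) :) := by
  ext p
  simp only [grid, Set.mem_ofPred_eq, coe_image, Set.mem_image, mem_coe, mem_product,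
    mem_Icc, Prod.exists]
  constructor
  · rintro ⟨a, b, ha₁, ha₂, hb₁, hb₂, rfl⟩
    exact ⟨a, b, ⟨⟨ha₁, ha₂⟩, hb₁, hb₂⟩, rfl⟩
  · rintro ⟨a, b, ⟨⟨ha₁, ha₂⟩, hb₁, hb₂⟩, rfl⟩
    exact ⟨a, b, ha₁, ha₂, hb₁, hb₂, rfl⟩

lemma grid_finite (n : ℕ) : (grid n).Finite := by
  rw [grid_eq_image]
  exact finite_toSet _

lemma mem_grid_bounds {n : ℕ} {p : ℝ × ℝ} (hp : p ∈ grid n) :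
    1 ≤ p.1 ∧ p.1 ≤ n ∧ 1 ≤ p.2 ∧ p.2 ≤ n := by
  obtain ⟨a, b, ha₁, ha₂, hb₁, hb₂, rfl⟩ := hp
  exact ⟨by simpa using ha₁, by simpa using ha₂, by simpa using hb₁, by simpa using hb₂⟩

lemma exists_dirForm_eq_natCast {n : ℕ} (v : ℕ × ℕ) {p : ℝ × ℝ} (hp : p ∈ grid n) :
    ∃ k : ℕ, dirForm v p = k ∧ k ≤ (v.1 + v.2) * n := by
  obtain ⟨a, b, -, ha, -, hb, rfl⟩ := hp
  refine ⟨v.1 * a + v.2 * b, by simp, ?_⟩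
  rw [add_mul]
  exact add_le_add (Nat.mul_le_mul_left _ ha) (Nat.mul_le_mul_left _ hb)

lemma dirForm_add_one_le {n : ℕ} (v : ℕ × ℕ) {p q : ℝ × ℝ} (hp : p ∈ grid n)
    (hq : q ∈ grid n) (h : dirForm v p < dirForm v q) : dirForm v p + 1 ≤ dirForm v q := by
  obtain ⟨k, hk, -⟩ := exists_dirForm_eq_natCast v hp
  obtain ⟨l, hl, -⟩ := exists_dirForm_eq_natCast v hq
  rw [hk, hl] at h ⊢
  exact_mod_cast Nat.cast_lt.1 h

end Grid

noncomputable def minLevel (v : ℕ × ℕ) (P : Set (ℝ × ℝ)) : ℝ := sInf (dirForm v '' P)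

section MinLevel

variable (v : ℕ × ℕ) {P Q : Set (ℝ × ℝ)}

lemma minLevel_le (hP : P.Finite) {p : ℝ × ℝ} (hp : p ∈ P) : minLevel v P ≤ dirForm v p :=
  csInf_le (hP.image _).bddBelow (Set.mem_image_of_mem _ hp)

lemma exists_dirForm_eq_minLevel (hP : P.Finite) (hne : P.Nonempty) :
    ∃ p ∈ P, dirForm v p = minLevel v P :=
  (hne.image _).csInf_mem (hP.image _)

lemma minLevel_mono (hP : P.Finite) (hQ : Q.Nonempty) (h : Q ⊆ P) :
    minLevel v P ≤ minLevel v Q :=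
  csInf_le_csInf (hP.image _).bddBelow (hQ.image _) (Set.image_mono h)

end MinLevel

/-- On `grid n` the form `n • dirForm v + fst` orders points lexicographically by
`(dirForm v, fst)`, since `dirForm v` is integral there and `fst` varies by less than `n`. -/
lemma mem_extremePoints_of_lex_min {n : ℕ} {P : Set (ℝ × ℝ)} (hPn : P ⊆ grid n)
    {v : ℕ × ℕ} (hv : 0 < v.2) {q : ℝ × ℝ} (hq : q ∈ P)
    (hmin : ∀ p ∈ P, dirForm v q ≤ dirForm v p)
    (hleft : ∀ p ∈ P, dirForm v p = dirForm v q → q.1 ≤ p.1) :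
    q ∈ (convexHull ℝ P).extremePoints ℝ := by
  refine mem_extremePoints_convexHull_of_forall_lt ((n : ℝ) • dirForm v + LinearMap.fst ℝ ℝ ℝ)
    hq fun p hp hpq => ?_
  simp only [LinearMap.add_apply, LinearMap.smul_apply, smul_eq_mul, LinearMap.fst_apply]
  obtain ⟨-, hqn, -, -⟩ := mem_grid_bounds (hPn hq)
  obtain ⟨hp₁, -, -, -⟩ := mem_grid_bounds (hPn hp)
  rcases (hmin p hp).eq_or_lt with heq | hlt
  · have hlt₁ : q.1 < p.1 := (hleft p hp heq.symm).lt_of_ne fun h =>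
      hpq (eq_of_dirForm_eq_of_fst_eq hv heq.symm h.symm)
    rw [heq]
    linarith
  · have := mul_le_mul_of_nonneg_left (dirForm_add_one_le v (hPn hq) (hPn hp) hlt)
      (Nat.cast_nonneg n)
    linarith

lemma exists_peeled_lex_min_of_minLevel_peel_eq {n : ℕ} {P : Set (ℝ × ℝ)} (hPn : P ⊆ grid n)
    {v : ℕ × ℕ} (hv : 0 < v.2) (hne : (peel P).Nonempty)
    (hstall : minLevel v (peel P) = minLevel v P) :
    ∃ q ∈ P \ peel P, (∀ p ∈ P, dirForm v q ≤ dirForm v p) ∧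
      ∃ p ∈ peel P, dirForm v p = dirForm v q ∧ q.1 < p.1 := by
  have hP : P.Finite := (grid_finite n).subset hPn
  obtain ⟨s, hs, hs_eq⟩ := exists_dirForm_eq_minLevel v (hP.subset (peel_subset P)) hne
  set F := {p ∈ P | dirForm v p = minLevel v P}
  have hsF : s ∈ F := ⟨peel_subset P hs, hs_eq.trans hstall⟩
  obtain ⟨q, hqF, hq_left⟩ :=
    Set.exists_min_image F Prod.fst (hP.subset (Set.sep_subset _ _)) ⟨s, hsF⟩
  have hq_min : ∀ p ∈ P, dirForm v q ≤ dirForm v p := fun p hp => hqF.2 ▸ minLevel_le v hP hp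
  have hq_dead : q ∉ peel P := fun h => h.2 <| mem_extremePoints_of_lex_min hPn hv hqF.1
    hq_min fun p hp he => hq_left p ⟨hp, he.trans hqF.2⟩
  have hsq : dirForm v s = dirForm v q := hsF.2.trans hqF.2.symm
  refine ⟨q, ⟨hqF.1, hq_dead⟩, hq_min, s, hs, hsq, (hq_left s hsF).lt_of_ne fun h => ?_⟩
  exact hq_dead (eq_of_dirForm_eq_of_fst_eq hv hsq h.symm ▸ hs)

lemma mul_le_mul_of_dirForm_eq_of_fst_lt {v w : ℕ × ℕ} {p q : ℝ × ℝ}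
    (hp : dirForm v p = dirForm v q) (hqp : q.1 < p.1) (hwp : dirForm w q ≤ dirForm w p) :
    (v.1 * w.2 : ℝ) ≤ v.2 * w.1 := by
  have key : (p.1 - q.1) * (v.2 * w.1 - v.1 * w.2) =
      v.2 * (dirForm w p - dirForm w q) - w.2 * (dirForm v p - dirForm v q) := by
    simp only [dirForm_apply]
    ring
  rw [hp, sub_self, mul_zero, sub_zero] at key
  have := (mul_nonneg_iff_of_pos_left (sub_pos.2 hqp)).1
    (key ▸ mul_nonneg (Nat.cast_nonneg _) (sub_nonneg.2 hwp))
  linarith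

lemma eq_of_coprime_of_mul_eq_mul {v w : ℕ × ℕ} (hv : v.1.Coprime v.2) (hw : w.1.Coprime w.2)
    (h : v.1 * w.2 = v.2 * w.1) : v = w := by
  have h₁ : v.1 ∣ w.1 := hv.dvd_of_dvd_mul_left ⟨w.2, h.symm⟩
  have h₁' : w.1 ∣ v.1 := hw.dvd_of_dvd_mul_left ⟨v.2, by linarith⟩
  have h₂ : v.2 ∣ w.2 := hv.symm.dvd_of_dvd_mul_left ⟨w.1, h⟩
  have h₂' : w.2 ∣ v.2 := hw.symm.dvd_of_dvd_mul_left ⟨v.1, by linarith⟩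
  exact Prod.ext (Nat.dvd_antisymm h₁ h₁') (Nat.dvd_antisymm h₂ h₂')

lemma card_filter_succ_ne_le_sub {a : ℕ → ℝ} {K : ℕ}
    (h : ∀ r < K, a r ≤ a (r + 1) ∧ (a (r + 1) ≠ a r → a r + 1 ≤ a (r + 1))) :
    (#{r ∈ range K | a (r + 1) ≠ a r} : ℝ) ≤ a K - a 0 := by
  rw [← sum_range_sub, card_filter]
  push_cast
  refine sum_le_sum fun r hr => ?_
  obtain ⟨hmono, hgap⟩ := h r (mem_range.1 hr)
  split_ifs with hne
  · linarith [hgap hne]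
  · linarith

section Counting

noncomputable def peelLevel (n : ℕ) (v : ℕ × ℕ) (r : ℕ) : ℝ := minLevel v (peel^[r] (grid n))

variable {n K : ℕ}

lemma card_peelLevel_increase_le (v : ℕ × ℕ) (hK : (peel^[K] (grid n)).Nonempty) :
    (#{r ∈ range K | peelLevel n v (r + 1) ≠ peelLevel n v r} : ℝ) ≤ (v.1 + v.2) * n := by
  have hfin : ∀ r, (peel^[r] (grid n)).Finite := fun r =>
    (grid_finite n).subset (iterate_peel_subset_of_le _ r.zero_le)
  have hne : ∀ r ≤ K, (peel^[r] (grid n)).Nonempty := fun r hr =>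
    hK.mono (iterate_peel_subset_of_le _ hr)
  have hval : ∀ r ≤ K, ∃ p ∈ grid n, dirForm v p = peelLevel n v r := fun r hr =>
    (exists_dirForm_eq_minLevel v (hfin r) (hne r hr)).imp fun p hp =>
      ⟨iterate_peel_subset_of_le _ r.zero_le hp.1, hp.2⟩
  have hmono : ∀ r < K, peelLevel n v r ≤ peelLevel n v (r + 1) := fun r hr =>
    minLevel_mono v (hfin r) (hne (r + 1) hr) (iterate_peel_subset_of_le _ r.le_succ)
  refine (card_filter_succ_ne_le_sub fun r hr => ⟨hmono r hr, fun hne' => ?_⟩).trans ?_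
  · obtain ⟨p, hp, hpr⟩ := hval r hr.le
    obtain ⟨p', hp', hpr'⟩ := hval (r + 1) hr
    have hle := hmono r hr
    rw [← hpr, ← hpr'] at hne' hle ⊢
    exact dirForm_add_one_le v hp hp' (hle.lt_of_ne hne'.symm)
  · obtain ⟨p, hp, hpK⟩ := hval K le_rfl
    obtain ⟨p₀, hp₀, hp₀0⟩ := hval 0 K.zero_le
    obtain ⟨k, hk, hkn⟩ := exists_dirForm_eq_natCast v hp
    obtain ⟨k₀, hk₀, -⟩ := exists_dirForm_eq_natCast v hp₀
    rw [← hpK, ← hp₀0, hk, hk₀]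
    have : (k : ℝ) ≤ (v.1 + v.2) * n := by exact_mod_cast hkn
    linarith [k₀.cast_nonneg (α := ℝ)]

lemma card_peelLevel_stall_le (D : Finset (ℕ × ℕ)) (hD : ∀ v ∈ D, 0 < v.2 ∧ v.1.Coprime v.2)
    (hK : (peel^[K] (grid n)).Nonempty) :
    #{x ∈ D ×ˢ range K | peelLevel n x.1 (x.2 + 1) = peelLevel n x.1 x.2} ≤ n ^ 2 := by
  set T : Finset ((ℕ × ℕ) × ℕ) :=
    {x ∈ D ×ˢ range K | peelLevel n x.1 (x.2 + 1) = peelLevel n x.1 x.2}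
  have hwit : ∀ x ∈ T,
      ∃ q ∈ peel^[x.2] (grid n) \ peel^[x.2 + 1] (grid n),
        (∀ p ∈ peel^[x.2] (grid n), dirForm x.1 q ≤ dirForm x.1 p) ∧
        ∃ p ∈ peel^[x.2 + 1] (grid n), dirForm x.1 p = dirForm x.1 q ∧ q.1 < p.1 := by
    intro x hx
    obtain ⟨hx, hstall⟩ := mem_filter.1 hx
    obtain ⟨hxD, hxK⟩ := mem_product.1 hx
    have hne := hK.mono (iterate_peel_subset_of_le _ (mem_range.1 hxK))
    rw [peelLevel, peelLevel, Function.iterate_succ_apply'] at hstall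
    rw [Function.iterate_succ_apply'] at hne ⊢
    exact exists_peeled_lex_min_of_minLevel_peel_eq (iterate_peel_subset_of_le _ x.2.zero_le)
      (hD x.1 hxD).1 hne hstall
  choose! f hf_dead hf_min hf_surv using hwit
  have hinj : Set.InjOn f T := by
    intro x hx y hy hxy
    have hr : x.2 = y.2 := eq_of_mem_sdiff_succ (antitone_iterate_peel _) (hf_dead x hx)
      (hxy ▸ hf_dead y hy)
    obtain ⟨p, hp, hpx, hpq⟩ := hf_surv x hx
    obtain ⟨p', hp', hpy, hp'q⟩ := hf_surv y hy
    rw [hxy] at hpx hpq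
    have h₁ := mul_le_mul_of_dirForm_eq_of_fst_lt hpx hpq
      (hf_min y hy p (hr ▸ iterate_peel_subset_of_le _ x.2.le_succ hp))
    have h₂ := mul_le_mul_of_dirForm_eq_of_fst_lt hpy hp'q
      (hxy ▸ hf_min x hx p' (hr.symm ▸ iterate_peel_subset_of_le _ y.2.le_succ hp'))
    have hxD := (mem_product.1 (mem_filter.1 hx).1).1
    have hyD := (mem_product.1 (mem_filter.1 hy).1).1
    refine Prod.ext (eq_of_coprime_of_mul_eq_mul (hD _ hxD).2 (hD _ hyD).2 ?_) hr
    exact_mod_cast (show (x.1.1 * y.1.2 : ℝ) = x.1.2 * y.1.1 by linarith)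
  calc #T ≤ #((Icc 1 n ×ˢ Icc 1 n).image fun ab : ℕ × ℕ => ((ab.1 : ℝ), (ab.2 : ℝ))) :=
        card_le_card_of_injOn f (fun x hx => by
          rw [mem_coe, ← mem_coe, ← grid_eq_image]
          exact iterate_peel_subset_of_le _ (Nat.zero_le _) (hf_dead x hx).1) hinj
    _ ≤ #(Icc 1 n ×ˢ Icc 1 n) := card_image_le
    _ = n ^ 2 := by simp [sq]

theorem card_mul_le_sum_add_sq (D : Finset (ℕ × ℕ)) (hD : ∀ v ∈ D, 0 < v.2 ∧ v.1.Coprime v.2)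
    (hK : (peel^[K] (grid n)).Nonempty) :
    (#D * K : ℝ) ≤ ∑ v ∈ D, ((v.1 : ℝ) + v.2) * n + n ^ 2 := by
  have hstall : ∑ v ∈ D, #{r ∈ range K | peelLevel n v (r + 1) = peelLevel n v r} ≤ n ^ 2 := by
    have hprod : ∑ v ∈ D, #{r ∈ range K | peelLevel n v (r + 1) = peelLevel n v r} =
        #{x ∈ D ×ˢ range K | peelLevel n x.1 (x.2 + 1) = peelLevel n x.1 x.2} := by
      simp only [card_filter, sum_product]
    exact hprod ▸ card_peelLevel_stall_le D hD hK
  have hinc := sum_le_sum fun v (_ : v ∈ D) => card_peelLevel_increase_le (n := n) v hK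
  calc (#D * K : ℝ) = ∑ _v ∈ D, (K : ℝ) := by rw [sum_const, nsmul_eq_mul]
    _ = ∑ v ∈ D, ((#{r ∈ range K | peelLevel n v (r + 1) = peelLevel n v r} : ℕ) +
          (#{r ∈ range K | peelLevel n v (r + 1) ≠ peelLevel n v r} : ℝ)) := by
        refine sum_congr rfl fun v _ => ?_
        rw [← Nat.cast_add, card_filter_add_card_filter_not, card_range]
    _ ≤ _ := by
        rw [sum_add_distrib]
        have : ((∑ v ∈ D, #{r ∈ range K | peelLevel n v (r + 1) = peelLevel n v r} : ℕ) : ℝ)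
            ≤ n ^ 2 := by exact_mod_cast hstall
        push_cast at this
        linarith

end Counting

lemma sum_Icc_two_one_div_sq_le (M : ℕ) : ∑ d ∈ Icc 2 M, 1 / (d : ℝ) ^ 2 ≤ 2 / 3 := by
  have h := sum_le_hasSum (insert 1 (Icc 2 M)) (fun _ _ => by positivity) hasSum_zeta_two
  rw [sum_insert (by simp)] at h
  nlinarith [Real.pi_pos, Real.pi_lt_d2]

lemma card_not_coprime_le (M : ℕ) :
    (#{v ∈ Icc 1 M ×ˢ Icc 1 M | ¬v.1.Coprime v.2} : ℝ) ≤ 2 / 3 * M ^ 2 := by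
  have hsub : {v ∈ Icc 1 M ×ˢ Icc 1 M | ¬v.1.Coprime v.2} ⊆
      (Icc 2 M).biUnion fun d =>
        {a ∈ Icc 1 M | d ∣ a} ×ˢ {b ∈ Icc 1 M | d ∣ b} := by
    intro v hv
    simp only [mem_filter, mem_product, mem_Icc] at hv
    obtain ⟨⟨⟨ha₁, haM⟩, hb₁, hbM⟩, hnc⟩ := hv
    have hg : 2 ≤ v.1.gcd v.2 := by
      have := Nat.gcd_pos_of_pos_left v.2 ha₁
      rw [Nat.Coprime] at hnc
      omega
    refine mem_biUnion.2 ⟨_, mem_Icc.2 ⟨hg, ?_⟩, ?_⟩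
    · exact (Nat.le_of_dvd ha₁ (Nat.gcd_dvd_left _ _)).trans haM
    · simp only [mem_product, mem_filter, mem_Icc]
      exact ⟨⟨⟨ha₁, haM⟩, Nat.gcd_dvd_left _ _⟩, ⟨hb₁, hbM⟩, Nat.gcd_dvd_right _ _⟩
  have hcard : ∀ d, #{a ∈ Icc 1 M | d ∣ a} = M / d := Nat.Ioc_filter_dvd_card_eq_div M
  calc (#{v ∈ Icc 1 M ×ˢ Icc 1 M | ¬v.1.Coprime v.2} : ℝ)
      ≤ ∑ d ∈ Icc 2 M, ((M / d : ℕ) : ℝ) ^ 2 := by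
        have := (card_le_card hsub).trans card_biUnion_le
        simp only [card_product, hcard, ← sq] at this
        exact_mod_cast this
    _ ≤ ∑ d ∈ Icc 2 M, (M : ℝ) ^ 2 * (1 / (d : ℝ) ^ 2) := by
        refine sum_le_sum fun d _ => ?_
        rw [← div_eq_mul_one_div, ← div_pow]
        exact pow_le_pow_left₀ (Nat.cast_nonneg _) Nat.cast_div_le 2
    _ ≤ 2 / 3 * M ^ 2 := by
        rw [← mul_sum, mul_comm]
        exact mul_le_mul_of_nonneg_right (sum_Icc_two_one_div_sq_le M) (by positivity)

def coprimePairs (M : ℕ) : Finset (ℕ × ℕ) :=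
  {v ∈ Icc 1 M ×ˢ Icc 1 M | v.1.Coprime v.2}

lemma mem_coprimePairs {M : ℕ} {v : ℕ × ℕ} :
    v ∈ coprimePairs M ↔ (1 ≤ v.1 ∧ v.1 ≤ M) ∧ (1 ≤ v.2 ∧ v.2 ≤ M) ∧ v.1.Coprime v.2 := by
  simp [coprimePairs, and_assoc]

lemma sq_le_three_mul_card_coprimePairs (M : ℕ) : (M : ℝ) ^ 2 ≤ 3 * #(coprimePairs M) := by
  have hsplit := card_filter_add_card_filter_not (s := Icc 1 M ×ˢ Icc 1 M)
    fun v : ℕ × ℕ => v.1.Coprime v.2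
  rw [card_product, Nat.card_Icc, add_tsub_cancel_right] at hsplit
  have hnc := card_not_coprime_le M
  rw [coprimePairs]
  have : (M : ℝ) ^ 2 = #{v ∈ Icc 1 M ×ˢ Icc 1 M | v.1.Coprime v.2} +
      #{v ∈ Icc 1 M ×ˢ Icc 1 M | ¬v.1.Coprime v.2} := by
    rw [sq]; exact_mod_cast hsplit.symm
  linarith

lemma tau_grid_le {M : ℕ} (hM : 0 < M) (n : ℕ) :
    (tau (grid n) : ℝ) ≤ 2 * M * n + 3 * n ^ 2 / M ^ 2 + 1 := by
  refine tau_le_of_forall_nonempty (by positivity) fun K hK => ?_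
  have hcount := card_mul_le_sum_add_sq (coprimePairs M)
    (fun v hv => ⟨(mem_coprimePairs.1 hv).2.1.1, (mem_coprimePairs.1 hv).2.2⟩) hK
  have hsum : ∑ v ∈ coprimePairs M, ((v.1 : ℝ) + v.2) * n ≤ #(coprimePairs M) * (2 * M * n) := by
    rw [← nsmul_eq_mul]
    refine sum_le_card_nsmul _ _ _ fun v hv => ?_
    obtain ⟨⟨-, h₁⟩, ⟨-, h₂⟩, -⟩ := mem_coprimePairs.1 hv
    have h₁' : (v.1 : ℝ) ≤ M := by exact_mod_cast h₁
    have h₂' : (v.2 : ℝ) ≤ M := by exact_mod_cast h₂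
    rw [two_mul]
    gcongr
  have hD := sq_le_three_mul_card_coprimePairs M
  have hMpos : (0 : ℝ) < M ^ 2 := by positivity
  have hDpos : (0 : ℝ) < #(coprimePairs M) := by linarith
  have hK' : (K : ℝ) ≤ 2 * M * n + n ^ 2 / #(coprimePairs M) := by
    rw [← sub_le_iff_le_add', le_div_iff₀ hDpos]
    linarith
  have : (n : ℝ) ^ 2 / #(coprimePairs M) ≤ 3 * n ^ 2 / M ^ 2 := by
    rw [div_le_div_iff₀ hDpos hMpos]
    nlinarith [sq_nonneg (n : ℝ)]
  linarith

/-- The peeling process on the `n × n` grid terminates after `O(n^{4/3})` iterations. -/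
theorem tau_grid_upper_bound :
    ∃ C : ℝ, 0 < C ∧ ∀ n : ℕ, 0 < n →
      (tau (grid n) : ℝ) ≤ C * (n : ℝ) ^ ((4 : ℝ) / 3) := by
  refine ⟨8, by norm_num, fun n hn => ?_⟩
  set t : ℝ := (n : ℝ) ^ ((1 : ℝ) / 3)
  have hn₀ : (0 : ℝ) ≤ n := n.cast_nonneg
  have ht : 1 ≤ t := Real.one_le_rpow (by exact_mod_cast hn) (by norm_num)
  have htn : (n : ℝ) = t ^ 3 := by
    rw [← Real.rpow_natCast, ← Real.rpow_mul hn₀]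
    norm_num
  have ht4 : (n : ℝ) ^ ((4 : ℝ) / 3) = t ^ 4 := by
    rw [← Real.rpow_natCast, ← Real.rpow_mul hn₀]
    norm_num
  set M : ℕ := ⌊t⌋₊ + 1
  have htM : t ≤ M := by
    push_cast [M]
    exact (Nat.lt_floor_add_one t).le
  have hMt : (M : ℝ) ≤ 2 * t := by
    push_cast [M]
    linarith [Nat.floor_le (by linarith : 0 ≤ t)]
  have hdiv : 3 * (t ^ 3) ^ 2 / (M : ℝ) ^ 2 ≤ 3 * t ^ 4 := by
    rw [div_le_iff₀ (by positivity)]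
    nlinarith [pow_le_pow_left₀ (by linarith) htM 2, pow_pos (by linarith : 0 < t) 4]
  calc (tau (grid n) : ℝ) ≤ 2 * M * n + 3 * n ^ 2 / M ^ 2 + 1 := tau_grid_le (Nat.succ_pos _) n
    _ ≤ 2 * (2 * t) * t ^ 3 + 3 * t ^ 4 + t ^ 4 := by
        rw [htn]
        gcongr
        exact one_le_pow₀ ht
    _ = 8 * (n : ℝ) ^ ((4 : ℝ) / 3) := by
        rw [ht4]
        ring
end

section
/- There exists a constant C > 0 such that for every positive integer n, every set S ⊆ G_n in strictly convex position (i.e., every point of S is an extreme point of convexHull ℝ S) satisfies |S| ≤ C·n^(2/3). -/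
/-!
A point that is extreme in the convex hull lies neither on a chord joining points to its left and
right, nor strictly between such a chord passing above it and one passing below it. So it lies
strictly above all these chords or strictly below all of them, which splits the set into an upper
and a lower chain; reflecting the lower one, both are upper chains. Consecutive points of an upper
chain, sorted by abscissa, differ by integer vectors of strictly decreasing slope, hence pairwise
distinct, and the sum of their `ℓ¹`-norms is at most `3n`: the abscissa only increases, while the
ordinate first rises and then falls. There are `O(m²)` integer vectors of norm at most `m`, and at
most `3n / m` distinct longer ones fit in that budget, so `m ≈ n^{1/3}` bounds the length of each
chain by `O(n^{2/3})`. Finally, no column holds three points (the middle one would lie on a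
vertical segment), so the set has at most twice as many points as the chains have abscissas.
-/

open Finset

def cross {R : Type*} [CommRing R] (u v : R × R) : R := u.1 * v.2 - u.2 * v.1

lemma cross_self_eq_zero {R : Type*} [CommRing R] (u : R × R) : cross u u = 0 := by
  unfold cross; ring

lemma cross_neg_trans {R : Type*} [CommRing R] [LinearOrder R] [IsStrictOrderedRing R]
    {u w z : R × R} (hu : 0 < u.1) (hw : 0 < w.1) (hz : 0 < z.1)
    (huw : cross u w < 0) (hwz : cross w z < 0) : cross u z < 0 := by
  have key : w.1 * cross u z = u.1 * cross w z + z.1 * cross u w := by unfold cross; ring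
  refine neg_of_mul_neg_right ?_ hw.le
  rw [key]
  exact add_neg (mul_neg_of_pos_of_neg hu hwz) (mul_neg_of_pos_of_neg hz huw)

section Plane

lemma mem_openSegment_of_fst_eq {p z₁ z₂ : ℝ × ℝ} (h₁ : z₁.1 = p.1) (h₂ : z₂.1 = p.1)
    (hlt₁ : z₁.2 < p.2) (hlt₂ : p.2 < z₂.2) : p ∈ openSegment ℝ z₁ z₂ := by
  obtain ⟨x₁, y₁⟩ := z₁
  obtain ⟨x₂, y₂⟩ := z₂
  dsimp only at h₁ h₂ hlt₁ hlt₂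
  subst h₁ h₂
  rw [← Prod.image_mk_openSegment_right, openSegment_eq_Ioo (hlt₁.trans hlt₂)]
  exact ⟨p.2, ⟨hlt₁, hlt₂⟩, rfl⟩

lemma exists_mem_openSegment_fst_eq {p q r : ℝ × ℝ} (hq : q.1 < p.1) (hr : p.1 < r.1) :
    ∃ z ∈ openSegment ℝ q r, z.1 = p.1 ∧
      cross (p - q) (r - p) = (r.1 - q.1) * (z.2 - p.2) := by
  have hd : 0 < r.1 - q.1 := by linarith
  set t := (p.1 - q.1) / (r.1 - q.1) with ht
  refine ⟨(1 - t) • q + t • r, ⟨1 - t, t, ?_, div_pos (by linarith) hd, by ring, rfl⟩, ?_, ?_⟩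
  · rw [sub_pos, ht, div_lt_one hd]; linarith
  · simp only [Prod.fst_add, Prod.smul_fst, smul_eq_mul, ht]
    field_simp; ring
  · simp only [cross, Prod.fst_sub, Prod.snd_sub, Prod.snd_add, Prod.smul_snd, smul_eq_mul, ht]
    field_simp; ring

variable {A : Set (ℝ × ℝ)} {p q r : ℝ × ℝ}

lemma not_lt_lt_of_mem_extremePoints {z₁ z₂ : ℝ × ℝ} (hp : p ∈ A.extremePoints ℝ)
    (hz₁ : z₁ ∈ A) (hz₂ : z₂ ∈ A) (h₁ : z₁.1 = p.1) (h₂ : z₂.1 = p.1) :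
    ¬(z₁.2 < p.2 ∧ p.2 < z₂.2) := by
  rintro ⟨hlt₁, hlt₂⟩
  have := (mem_extremePoints.1 hp).2 z₁ hz₁ z₂ hz₂ (mem_openSegment_of_fst_eq h₁ h₂ hlt₁ hlt₂)
  exact hlt₁.ne (congrArg Prod.snd this.1)

lemma cross_ne_zero_of_mem_extremePoints (hp : p ∈ A.extremePoints ℝ) (hqA : q ∈ A)
    (hrA : r ∈ A) (hq : q.1 < p.1) (hr : p.1 < r.1) : cross (p - q) (r - p) ≠ 0 := by
  intro h0
  obtain ⟨z, hz, hz₁, hcross⟩ := exists_mem_openSegment_fst_eq hq hr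
  have hz₂ : z.2 = p.2 :=
    sub_eq_zero.1 ((mul_eq_zero.1 (hcross.symm.trans h0)).resolve_left (by linarith))
  rw [Prod.ext hz₁ hz₂] at hz
  exact hq.ne (congrArg Prod.fst ((mem_extremePoints.1 hp).2 q hqA r hrA hz).1)

lemma cross_neg_of_cross_neg (hA : Convex ℝ A) (hp : p ∈ A.extremePoints ℝ) {q' r' : ℝ × ℝ}
    (hqA : q ∈ A) (hrA : r ∈ A) (hq'A : q' ∈ A) (hr'A : r' ∈ A) (hq : q.1 < p.1)
    (hr : p.1 < r.1) (hq' : q'.1 < p.1) (hr' : p.1 < r'.1) (h : cross (p - q) (r - p) < 0) :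
    cross (p - q') (r' - p) < 0 := by
  refine lt_of_le_of_ne (not_lt.1 fun hpos => ?_)
    (cross_ne_zero_of_mem_extremePoints hp hq'A hr'A hq' hr')
  obtain ⟨z, hz, hz₁, hcross⟩ := exists_mem_openSegment_fst_eq hq hr
  obtain ⟨z', hz', hz'₁, hcross'⟩ := exists_mem_openSegment_fst_eq hq' hr'
  rw [hcross] at h
  rw [hcross'] at hpos
  have hlt : z.2 < p.2 := sub_neg.1 (neg_of_mul_neg_right h (by linarith))
  have hlt' : p.2 < z'.2 := sub_pos.1 (pos_of_mul_pos_right hpos (by linarith))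
  exact not_lt_lt_of_mem_extremePoints hp (hA.openSegment_subset hqA hrA hz)
    (hA.openSegment_subset hq'A hr'A hz') hz₁ hz'₁ ⟨hlt, hlt'⟩

end Plane

def toPlane (p : ℤ × ℤ) : ℝ × ℝ := ((p.1 : ℝ), (p.2 : ℝ))

lemma toPlane_injective : Function.Injective toPlane := by
  intro p q h
  simp only [toPlane, Prod.mk.injEq, Int.cast_inj] at h
  exact Prod.ext h.1 h.2

lemma cross_toPlane (p q r : ℤ × ℤ) :
    cross (toPlane p - toPlane q) (toPlane r - toPlane p) = ((cross (p - q) (r - p) : ℤ) : ℝ) := by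
  simp only [cross, toPlane, Prod.fst_sub, Prod.snd_sub]
  push_cast; ring

lemma exists_finset_image_toPlane_eq {n : ℕ} {S : Set (ℝ × ℝ)} (hS : S ⊆ grid n) :
    ∃ T : Finset (ℤ × ℤ), (∀ p ∈ T, 1 ≤ p.1 ∧ p.1 ≤ n ∧ 1 ≤ p.2 ∧ p.2 ≤ n) ∧
      toPlane '' T = S := by
  classical
  refine ⟨(Icc (1 : ℤ) n ×ˢ Icc (1 : ℤ) n).filter (toPlane · ∈ S), fun p hp => ?_, ?_⟩
  · simp only [mem_filter, mem_product, mem_Icc] at hp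
    omega
  · ext x
    refine ⟨fun ⟨p, hp, hpx⟩ => hpx ▸ (mem_filter.1 hp).2, fun hx => ?_⟩
    obtain ⟨a, b, ha₁, ha₂, hb₁, hb₂, rfl⟩ := hS hx
    refine ⟨(a, b), mem_filter.2 ⟨?_, by simpa [toPlane] using hx⟩, by simp [toPlane]⟩
    simp only [mem_product, mem_Icc]
    omega

/-- `cross (p - q) (r - p) < 0` says that the path `q → p → r` turns clockwise, that is, `p` lies
strictly above the chord `qr`. -/
def IsUpperChain (W : Finset (ℤ × ℤ)) : Prop :=
  ∀ p ∈ W, ∀ q ∈ W, ∀ r ∈ W, q.1 < p.1 → p.1 < r.1 → cross (p - q) (r - p) < 0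

def upperPart (T : Finset (ℤ × ℤ)) : Finset (ℤ × ℤ) :=
  T.filter fun p => ∀ q ∈ T, ∀ r ∈ T, q.1 < p.1 → p.1 < r.1 → cross (p - q) (r - p) < 0

def lowerPart (T : Finset (ℤ × ℤ)) : Finset (ℤ × ℤ) :=
  T.filter fun p => ∀ q ∈ T, ∀ r ∈ T, q.1 < p.1 → p.1 < r.1 → 0 < cross (p - q) (r - p)

def reflect (p : ℤ × ℤ) : ℤ × ℤ := (p.1, -p.2)

lemma isUpperChain_upperPart (T : Finset (ℤ × ℤ)) : IsUpperChain (upperPart T) :=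
  fun _ hp q hq r hr => (mem_filter.1 hp).2 q (mem_filter.1 hq).1 r (mem_filter.1 hr).1

lemma isUpperChain_image_reflect_lowerPart (T : Finset (ℤ × ℤ)) :
    IsUpperChain ((lowerPart T).image reflect) := by
  simp only [IsUpperChain, forall_mem_image]
  intro p hp q hq r hr hqp hpr
  have := (mem_filter.1 hp).2 q (mem_filter.1 hq).1 r (mem_filter.1 hr).1 hqp hpr
  simp only [reflect, cross, Prod.fst_sub, Prod.snd_sub] at this ⊢
  linarith

section Lattice

variable {T : Finset (ℤ × ℤ)} {p q r : ℤ × ℤ}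

lemma not_lt_lt_of_fst_eq (hT : toPlane '' T ⊆ (convexHull ℝ (toPlane '' T)).extremePoints ℝ)
    (hp : p ∈ T) (hq : q ∈ T) (hr : r ∈ T) (h₁ : q.1 = p.1) (h₂ : r.1 = p.1) :
    ¬(q.2 < p.2 ∧ p.2 < r.2) := fun h =>
  not_lt_lt_of_mem_extremePoints (hT (Set.mem_image_of_mem _ hp))
    (subset_convexHull ℝ _ (Set.mem_image_of_mem _ hq))
    (subset_convexHull ℝ _ (Set.mem_image_of_mem _ hr))
    (congrArg Int.cast h₁) (congrArg Int.cast h₂) ⟨Int.cast_lt.2 h.1, Int.cast_lt.2 h.2⟩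

lemma subset_upperPart_union_lowerPart
    (hT : toPlane '' T ⊆ (convexHull ℝ (toPlane '' T)).extremePoints ℝ) :
    T ⊆ upperPart T ∪ lowerPart T := by
  have hull : ∀ {x}, x ∈ T → toPlane x ∈ convexHull ℝ (toPlane '' T) :=
    fun hx => subset_convexHull ℝ _ (Set.mem_image_of_mem _ hx)
  intro p hp
  have hext := hT (Set.mem_image_of_mem _ hp)
  by_cases hup : ∀ q ∈ T, ∀ r ∈ T, q.1 < p.1 → p.1 < r.1 → cross (p - q) (r - p) < 0
  · exact mem_union_left _ (mem_filter.2 ⟨hp, hup⟩)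
  refine mem_union_right _ (mem_filter.2 ⟨hp, fun q hq r hr hqp hpr => ?_⟩)
  have hne := cross_ne_zero_of_mem_extremePoints hext (hull hq) (hull hr)
    (Int.cast_lt.2 hqp) (Int.cast_lt.2 hpr)
  rw [cross_toPlane, Int.cast_ne_zero] at hne
  refine hne.lt_or_gt.resolve_left fun hneg => hup fun q' hq' r' hr' hqp' hpr' => ?_
  have := cross_neg_of_cross_neg (convex_convexHull ℝ _) hext (hull hq) (hull hr) (hull hq')
    (hull hr') (Int.cast_lt.2 hqp) (Int.cast_lt.2 hpr) (Int.cast_lt.2 hqp')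
    (Int.cast_lt.2 hpr') (by rw [cross_toPlane]; exact_mod_cast hneg)
  rw [cross_toPlane] at this
  exact_mod_cast this

lemma card_filter_fst_eq_le_two
    (hT : ∀ p ∈ T, ∀ q ∈ T, ∀ r ∈ T, q.1 = p.1 → r.1 = p.1 → ¬(q.2 < p.2 ∧ p.2 < r.2))
    (x : ℤ) : #(T.filter (·.1 = x)) ≤ 2 := by
  set C := T.filter (·.1 = x)
  have hinj : Set.InjOn Prod.snd (C : Set (ℤ × ℤ)) := fun p hp q hq h =>
    Prod.ext ((mem_filter.1 hp).2.trans (mem_filter.1 hq).2.symm) h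
  rw [← card_image_of_injOn hinj]
  set Y := C.image Prod.snd
  rcases Y.eq_empty_or_nonempty with hY | hY
  · simp [hY]
  refine (card_le_card fun y hy => ?_).trans (card_le_two (a := Y.min' hY) (b := Y.max' hY))
  obtain ⟨p, hp, rfl⟩ := mem_image.1 hy
  obtain ⟨q, hq, hqy⟩ := mem_image.1 (Y.min'_mem hY)
  obtain ⟨r, hr, hry⟩ := mem_image.1 (Y.max'_mem hY)
  by_contra hpair
  simp only [mem_insert, mem_singleton, not_or] at hpair
  refine hT p (mem_filter.1 hp).1 q (mem_filter.1 hq).1 r (mem_filter.1 hr).1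
    ((mem_filter.1 hq).2.trans (mem_filter.1 hp).2.symm)
    ((mem_filter.1 hr).2.trans (mem_filter.1 hp).2.symm) ⟨?_, ?_⟩
  · rw [hqy]; exact lt_of_le_of_ne (Y.min'_le _ hy) (Ne.symm hpair.1)
  · rw [hry]; exact lt_of_le_of_ne (Y.le_max' _ hy) hpair.2

lemma card_le_two_mul_card_image_fst
    (hT : toPlane '' T ⊆ (convexHull ℝ (toPlane '' T)).extremePoints ℝ) :
    #T ≤ 2 * #(T.image Prod.fst) :=
  card_le_mul_card_image T 2 fun x _ =>
    card_filter_fst_eq_le_two (fun _ hp _ hq _ hr => not_lt_lt_of_fst_eq hT hp hq hr) x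

end Lattice

theorem card_le_of_sum_abs_le (V : Finset (ℤ × ℤ)) {t : ℝ} (ht : 1 ≤ t)
    (hV : ((∑ v ∈ V, (|v.1| + |v.2|) : ℤ) : ℝ) ≤ t ^ 3) : (#V : ℝ) ≤ 26 * t ^ 2 := by
  set m := ⌈t⌉₊
  have hmt : t ≤ m := Nat.le_ceil t
  have hm : (m : ℝ) < t + 1 := Nat.ceil_lt_add_one (by linarith)
  set small := V.filter fun v => |v.1| + |v.2| ≤ (m : ℤ)
  set large := V.filter fun v => ¬|v.1| + |v.2| ≤ (m : ℤ)
  have hsmall : #small ≤ (2 * m + 1) ^ 2 := by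
    calc #small ≤ #(Icc (-(m : ℤ), -(m : ℤ)) (m, m)) := card_le_card fun v hv => by
          have hv := (mem_filter.1 hv).2
          have h₁ := abs_le.1 (show |v.1| ≤ m by linarith [abs_nonneg v.2])
          have h₂ := abs_le.1 (show |v.2| ≤ m by linarith [abs_nonneg v.1])
          exact mem_Icc.2 ⟨⟨h₁.1, h₂.1⟩, h₁.2, h₂.2⟩
      _ = (2 * m + 1) ^ 2 := by
          rw [card_Icc_prod, Int.card_Icc]
          dsimp only
          rw [show ((m : ℤ) + 1 - -(m : ℤ)).toNat = 2 * m + 1 by omega, sq]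
  have hlarge : ((m : ℤ) + 1) * #large ≤ ∑ v ∈ V, (|v.1| + |v.2|) :=
    calc ((m : ℤ) + 1) * #large = ∑ _v ∈ large, ((m : ℤ) + 1) := by
          rw [sum_const, nsmul_eq_mul, mul_comm]
      _ ≤ ∑ v ∈ large, (|v.1| + |v.2|) := sum_le_sum fun v hv => by
          have := (mem_filter.1 hv).2
          omega
      _ ≤ ∑ v ∈ V, (|v.1| + |v.2|) :=
          sum_le_sum_of_subset_of_nonneg (filter_subset _ _) fun v _ _ => by positivity
  have h₁ : (#small : ℝ) ≤ 25 * t ^ 2 := by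
    have : (#small : ℝ) ≤ (2 * m + 1) ^ 2 := by exact_mod_cast hsmall
    nlinarith
  have h₂ : (#large : ℝ) ≤ t ^ 2 := by
    have : ((m : ℝ) + 1) * #large ≤ t ^ 3 := by
      exact_mod_cast (Int.cast_le (R := ℝ).2 hlarge).trans hV
    have : t * #large ≤ t * t ^ 2 := by nlinarith [(Nat.cast_nonneg #large : (0 : ℝ) ≤ #large)]
    exact le_of_mul_le_mul_left this (by linarith)
  rw [← card_filter_add_card_filter_not (fun v : ℤ × ℤ => |v.1| + |v.2| ≤ (m : ℤ))]
  push_cast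
  linarith

lemma cross_neg_of_lt {v : ℕ → ℤ × ℤ} {K : ℕ} (hpos : ∀ i < K, 0 < (v i).1)
    (hturn : ∀ i, i + 1 < K → cross (v i) (v (i + 1)) < 0) {i j : ℕ} (hij : i < j)
    (hj : j < K) : cross (v i) (v j) < 0 := by
  induction j, hij using Nat.le_induction with
  | base => exact hturn i hj
  | succ j hij ih =>
    exact cross_neg_trans (hpos i (by omega)) (hpos j (by omega)) (hpos _ hj) (ih (by omega))
      (hturn j hj)

lemma exists_forall_iff_lt_of_downward_closed {P : ℕ → Prop} {K : ℕ}
    (hP : ∀ i j, i < j → j < K → P j → P i) : ∃ M ≤ K, ∀ i < K, (P i ↔ i < M) := by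
  classical
  have hex : ∃ M, M = K ∨ ¬P M := ⟨K, Or.inl rfl⟩
  refine ⟨Nat.find hex, Nat.find_min' hex (Or.inl rfl), fun i hi => ⟨fun hPi => ?_, fun hlt => ?_⟩⟩
  · by_contra hle
    rcases Nat.find_spec hex with h | h
    · omega
    · rcases (not_lt.1 hle).eq_or_lt with heq | hlt
      · exact h (heq ▸ hPi)
      · exact h (hP _ _ hlt hi hPi)
  · exact not_not.1 (not_or.1 (Nat.find_min hex hlt)).2

lemma sum_abs_sub_of_unimodal (b : ℕ → ℤ) {M K : ℕ} (hMK : M ≤ K)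
    (hup : ∀ i < M, b i ≤ b (i + 1)) (hdown : ∀ i, M ≤ i → i < K → b (i + 1) ≤ b i) :
    ∑ i ∈ range K, |b (i + 1) - b i| = 2 * b M - b 0 - b K := by
  induction K, hMK using Nat.le_induction with
  | base =>
    rw [sum_congr rfl fun i hi => abs_of_nonneg (sub_nonneg.2 (hup i (mem_range.1 hi))),
      sum_range_sub]
    ring
  | succ K hMK ih =>
    rw [sum_range_succ, ih fun i hi hiK => hdown i hi (by omega),
      abs_of_nonpos (sub_nonpos.2 (hdown K hMK (by omega)))]
    ring

theorem length_le_of_concave_path (P : ℕ → ℤ × ℤ) {K n : ℕ} (hn : 1 ≤ n)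
    (hmono : ∀ i < K, (P i).1 < (P (i + 1)).1)
    (hturn : ∀ i, i + 1 < K → cross (P (i + 1) - P i) (P (i + 2) - P (i + 1)) < 0)
    (hspread : ∀ i ≤ K, ∀ j ≤ K, (P i).1 - (P j).1 ≤ n ∧ (P i).2 - (P j).2 ≤ n) :
    (K : ℝ) ≤ 234 * (n : ℝ) ^ ((2 : ℝ) / 3) := by
  set v : ℕ → ℤ × ℤ := fun i => P (i + 1) - P i
  have hpos : ∀ i < K, 0 < (v i).1 := fun i hi => sub_pos.2 (hmono i hi)
  have hcross : ∀ {i j}, i < j → j < K → cross (v i) (v j) < 0 := cross_neg_of_lt hpos hturn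
  have hinj : Set.InjOn v (range K) := by
    intro i hi j hj hij
    by_contra hne
    rcases Nat.lt_or_gt_of_ne hne with h | h
    · exact (hcross h (mem_range.1 hj)).ne (hij ▸ cross_self_eq_zero _)
    · exact (hcross h (mem_range.1 hi)).ne (hij ▸ cross_self_eq_zero _)
  have hsumx : ∑ i ∈ range K, |(v i).1| = (P K).1 - (P 0).1 := by
    rw [sum_congr rfl fun i hi => abs_of_pos (hpos i (mem_range.1 hi))]
    exact sum_range_sub (fun i => (P i).1) K
  -- slopes decrease, so the rising edges come first
  have hrise : ∀ i j, i < j → j < K → 0 ≤ (v j).2 → 0 ≤ (v i).2 := by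
    intro i j hij hj hvj
    have := hcross hij hj
    unfold cross at this
    nlinarith [hpos i (hij.trans hj), hpos j hj]
  obtain ⟨M, hMK, hM⟩ := exists_forall_iff_lt_of_downward_closed hrise
  have hsumy : ∑ i ∈ range K, |(v i).2| = 2 * (P M).2 - (P 0).2 - (P K).2 :=
    sum_abs_sub_of_unimodal (fun i => (P i).2) hMK
      (fun i hi => sub_nonneg.1 ((hM i (by omega)).2 hi))
      (fun i hi hiK => sub_nonpos.1 (le_of_not_ge fun h => hi.not_gt ((hM i hiK).1 h)))
  have hweight : ∑ i ∈ range K, (|(v i).1| + |(v i).2|) ≤ 3 * n := by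
    rw [sum_add_distrib, hsumx, hsumy]
    have := (hspread K le_rfl 0 (Nat.zero_le _)).1
    have := (hspread M hMK 0 (Nat.zero_le _)).2
    have := (hspread M hMK K le_rfl).2
    omega
  have hn' : (1 : ℝ) ≤ n := by exact_mod_cast hn
  set c := (n : ℝ) ^ ((1 : ℝ) / 3)
  have hc : 1 ≤ c := Real.one_le_rpow hn' (by norm_num)
  have hc3 : c ^ 3 = n := by
    rw [← Real.rpow_natCast, ← Real.rpow_mul (by positivity)]; norm_num
  have hc2 : c ^ 2 = (n : ℝ) ^ ((2 : ℝ) / 3) := by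
    rw [← Real.rpow_natCast, ← Real.rpow_mul (by positivity)]; norm_num
  have hV := card_le_of_sum_abs_le ((range K).image v) (t := 3 * c) (by linarith) (by
    rw [sum_image hinj, mul_pow, hc3]
    have : ((∑ i ∈ range K, (|(v i).1| + |(v i).2|) : ℤ) : ℝ) ≤ 3 * n := by
      exact_mod_cast hweight
    linarith)
  rw [card_image_of_injOn hinj, card_range, mul_pow, hc2] at hV
  linarith

theorem card_image_fst_le_of_isUpperChain {W : Finset (ℤ × ℤ)} (hW : IsUpperChain W) {n : ℕ}
    (hn : 1 ≤ n) (hspread : ∀ p ∈ W, ∀ q ∈ W, p.1 - q.1 ≤ n ∧ p.2 - q.2 ≤ n) :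
    (#(W.image Prod.fst) : ℝ) ≤ 235 * (n : ℝ) ^ ((2 : ℝ) / 3) := by
  set X := W.image Prod.fst
  have h₁ : (1 : ℝ) ≤ (n : ℝ) ^ ((2 : ℝ) / 3) :=
    Real.one_le_rpow (by exact_mod_cast hn) (by norm_num)
  obtain hX | hX := Nat.eq_zero_or_pos #X
  · rw [hX, Nat.cast_zero]; positivity
  set e := X.orderEmbOfFin rfl
  set a : ℕ → ℤ := fun i => if h : i < #X then e ⟨i, h⟩ else 0
  set P : ℕ → ℤ × ℤ := fun i => Function.invFunOn Prod.fst (W : Set (ℤ × ℤ)) (a i)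
  have hP : ∀ i < #X, P i ∈ W ∧ (P i).1 = a i := fun i hi => by
    have hmem : a i ∈ X := by simp only [a, dif_pos hi]; exact orderEmbOfFin_mem _ _ _
    have hex : ∃ p ∈ (W : Set (ℤ × ℤ)), p.1 = a i := by simpa [X] using hmem
    exact ⟨Function.invFunOn_mem hex, Function.invFunOn_eq hex⟩
  have hPx : ∀ i j, i < j → j < #X → (P i).1 < (P j).1 := fun i j hij hj => by
    rw [(hP i (hij.trans hj)).2, (hP j hj).2]
    simp only [a, dif_pos hj, dif_pos (hij.trans hj)]
    exact e.strictMono (Fin.mk_lt_mk.2 hij)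
  have hK := length_le_of_concave_path P (K := #X - 1) hn
    (fun i hi => hPx i (i + 1) (by omega) (by omega))
    (fun i hi => hW _ (hP (i + 1) (by omega)).1 _ (hP i (by omega)).1 _ (hP (i + 2) (by omega)).1
      (hPx _ _ (by omega) (by omega)) (hPx _ _ (by omega) (by omega)))
    (fun i hi j hj => hspread _ (hP i (by omega)).1 _ (hP j (by omega)).1)
  rw [Nat.cast_sub hX, Nat.cast_one] at hK
  linarith

section Parts

variable {T : Finset (ℤ × ℤ)} {n : ℕ}

lemma card_image_fst_upperPart_le (hn : 1 ≤ n)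
    (hspread : ∀ p ∈ T, ∀ q ∈ T, p.1 - q.1 ≤ n ∧ p.2 - q.2 ≤ n) :
    (#((upperPart T).image Prod.fst) : ℝ) ≤ 235 * (n : ℝ) ^ ((2 : ℝ) / 3) :=
  card_image_fst_le_of_isUpperChain (isUpperChain_upperPart T) hn
    fun p hp q hq => hspread p (mem_filter.1 hp).1 q (mem_filter.1 hq).1

lemma card_image_fst_lowerPart_le (hn : 1 ≤ n)
    (hspread : ∀ p ∈ T, ∀ q ∈ T, p.1 - q.1 ≤ n ∧ p.2 - q.2 ≤ n) :
    (#((lowerPart T).image Prod.fst) : ℝ) ≤ 235 * (n : ℝ) ^ ((2 : ℝ) / 3) := by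
  have h := card_image_fst_le_of_isUpperChain (isUpperChain_image_reflect_lowerPart T) hn (by
    simp only [forall_mem_image, reflect]
    intro p hp q hq
    have := hspread p (mem_filter.1 hp).1 q (mem_filter.1 hq).1
    have := hspread q (mem_filter.1 hq).1 p (mem_filter.1 hp).1
    constructor <;> omega)
  rwa [image_image] at h

end Parts

/-- Any subset of the `n × n` grid in strictly convex position (every point is an
extreme point of its convex hull) has at most `O(n^{2/3})` points. -/
theorem convex_position_grid_upper_bound :
    ∃ C : ℝ, 0 < C ∧ ∀ n : ℕ, 0 < n → ∀ S : Set (ℝ × ℝ), S ⊆ grid n →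
      (∀ p ∈ S, p ∈ (convexHull ℝ S).extremePoints ℝ) →
      (S.ncard : ℝ) ≤ C * (n : ℝ) ^ ((2 : ℝ) / 3) := by
  refine ⟨940, by norm_num, fun n hn S hSg hS => ?_⟩
  obtain ⟨T, hbox, rfl⟩ := exists_finset_image_toPlane_eq hSg
  rw [Set.ncard_image_of_injective _ toPlane_injective, Set.ncard_coe_finset]
  have hspread : ∀ p ∈ T, ∀ q ∈ T, p.1 - q.1 ≤ n ∧ p.2 - q.2 ≤ n := fun p hp q hq => by
    have := hbox p hp; have := hbox q hq; omega
  have hsplit : #(T.image Prod.fst) ≤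
      #((upperPart T).image Prod.fst) + #((lowerPart T).image Prod.fst) :=
    calc #(T.image Prod.fst) ≤ #((upperPart T ∪ lowerPart T).image Prod.fst) :=
          card_le_card (image_subset_image (subset_upperPart_union_lowerPart hS))
      _ ≤ _ := by rw [image_union]; exact card_union_le _ _
  have hcard : (#T : ℝ) ≤
      2 * (#((upperPart T).image Prod.fst) + #((lowerPart T).image Prod.fst)) := by
    exact_mod_cast (card_le_two_mul_card_image_fst hS).trans (Nat.mul_le_mul_left 2 hsplit)
  linarith [card_image_fst_upperPart_le hn hspread, card_image_fst_lowerPart_le hn hspread]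
end

section
/- Let P ⊆ ℤ² be a finite set with |P| ≥ 2 and let v = (v_x, v_y) ∈ ℤ² be nonzero. Suppose w_v attains its maximum over P at a unique point of P and attains its minimum over P at a unique point of P. Then the number of integers m for which some point q of convexHull ℝ (peel(P)) has w_v(q) = m is at most the number of integers m for which some point q of convexHull ℝ P has w_v(q) = m, minus 2. (In particular, at least two lines of direction v through integer points that meet convexHull ℝ P no longer meet convexHull ℝ (peel(P)).) -/
/-- For `v = (v_x, v_y)`, the linear functional `w_v(x, y) = v_x·y − v_y·x`;
two points lie on a common line of direction `v` iff `w_v` agrees on them. -/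
def wv (v : ℤ × ℤ) (p : ℝ × ℝ) : ℝ :=
  (v.1 : ℝ) * p.2 - (v.2 : ℝ) * p.1

open Set

lemma ExistsUnique.exists_mem_forall_le_forall_ne_lt {α β : Type*} [LinearOrder β] {f : α → β}
    {P : Set α} (h : ∃! p, p ∈ P ∧ ∀ q ∈ P, f q ≤ f p) :
    ∃ p ∈ P, (∀ q ∈ P, f q ≤ f p) ∧ ∀ q ∈ P, q ≠ p → f q < f p := by
  obtain ⟨p, ⟨hp, hle⟩, huniq⟩ := h
  exact ⟨p, hp, hle, fun q hq hne ↦ (hle q hq).lt_of_ne fun heq ↦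
    hne (huniq q ⟨hq, fun r hr ↦ heq ▸ hle r hr⟩)⟩

section StrictMaximizer

variable {𝕜 E : Type*} [Field 𝕜] [LinearOrder 𝕜] [IsStrictOrderedRing 𝕜]
  [AddCommGroup E] [Module 𝕜 E] (L : E →ₗ[𝕜] 𝕜) (p : E)

lemma convex_insert_halfSpace_lt : Convex 𝕜 (insert p {x | L x < L p}) := by
  refine convex_iff_openSegment_subset.2 fun x hx y hy z ⟨a, b, ha, hb, hab, hz⟩ ↦ ?_
  subst hz
  have hxle : L x ≤ L p := by rcases hx with rfl | hx; exacts [le_rfl, le_of_lt hx]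
  have hyle : L y ≤ L p := by rcases hy with rfl | hy; exacts [le_rfl, le_of_lt hy]
  by_cases hxy : x = p ∧ y = p
  · obtain ⟨rfl, rfl⟩ := hxy
    exact Or.inl (Convex.combo_self hab _)
  right
  have hstrict : L x < L p ∨ L y < L p := by
    rcases hx with rfl | hx
    · exact Or.inr (hy.resolve_left fun h ↦ hxy ⟨rfl, h⟩)
    · exact Or.inl hx
  show L (a • x + b • y) < L p
  rw [map_add, map_smul, map_smul, smul_eq_mul, smul_eq_mul]
  calc a * L x + b * L y < a * L p + b * L p := by
        rcases hstrict with h | h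
        · exact add_lt_add_of_lt_of_le (mul_lt_mul_of_pos_left h ha)
            (mul_le_mul_of_nonneg_left hyle hb.le)
        · exact add_lt_add_of_le_of_lt (mul_le_mul_of_nonneg_left hxle ha.le)
            (mul_lt_mul_of_pos_left h hb)
    _ = L p := by rw [← add_mul, hab, one_mul]

variable {L p}

lemma mem_extremePoints_convexHull_of_forall_ne_lt {P : Set E} (hp : p ∈ P)
    (hlt : ∀ q ∈ P, q ≠ p → L q < L p) : p ∈ (convexHull 𝕜 P).extremePoints 𝕜 := by
  have hhull : convexHull 𝕜 P ⊆ insert p {x | L x < L p} :=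
    convexHull_min (fun q hq ↦ (eq_or_ne q p).imp id (hlt q hq)) (convex_insert_halfSpace_lt L p)
  have hsdiff : convexHull 𝕜 P \ {p} = convexHull 𝕜 P ∩ {x | L x < L p} := by
    ext x
    refine ⟨fun ⟨hx, hxp⟩ ↦ ⟨hx, (hhull hx).resolve_left hxp⟩, fun ⟨hx, hlt⟩ ↦ ⟨hx, ?_⟩⟩
    rintro rfl
    exact lt_irrefl _ hlt
  rw [(convex_convexHull 𝕜 P).mem_extremePoints_iff_convex_sdiff, hsdiff]
  exact ⟨subset_convexHull 𝕜 P hp,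
    (convex_convexHull 𝕜 P).inter (convex_halfSpace_lt L.isLinear _)⟩

lemma mem_extremePoints_convexHull_of_forall_ne_gt {P : Set E} (hp : p ∈ P)
    (hgt : ∀ q ∈ P, q ≠ p → L p < L q) : p ∈ (convexHull 𝕜 P).extremePoints 𝕜 :=
  mem_extremePoints_convexHull_of_forall_ne_lt (L := -L) hp fun q hq hne ↦ neg_lt_neg (hgt q hq hne)

end StrictMaximizer

section IntegerLevels

variable {E : Type*} [AddCommGroup E] [Module ℝ E] (L : E →ₗ[ℝ] ℝ)

def integerLevels (s : Set E) : Set ℤ := Int.cast ⁻¹' (L '' s)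

variable {L} {s : Set E} {a b : ℤ}

lemma integerLevels_convexHull_subset_Icc (hs : ∀ q ∈ s, a ≤ L q ∧ L q ≤ b) :
    integerLevels L (convexHull ℝ s) ⊆ Icc a b := by
  intro m hm
  have hsub : convexHull ℝ (L '' s) ⊆ Icc (a : ℝ) b :=
    convexHull_min (by rintro _ ⟨q, hq, rfl⟩; exact hs q hq) (convex_Icc _ _)
  have hm' : (m : ℝ) ∈ Icc (a : ℝ) b := hsub (by rw [← L.image_convexHull]; exact hm)
  exact ⟨by exact_mod_cast hm'.1, by exact_mod_cast hm'.2⟩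

lemma integerLevels_convexHull_eq_Icc {p q : E} (hp : p ∈ s) (hq : q ∈ s) (hpa : L p = a)
    (hqb : L q = b) (hs : ∀ q ∈ s, a ≤ L q ∧ L q ≤ b) :
    integerLevels L (convexHull ℝ s) = Icc a b := by
  refine (integerLevels_convexHull_subset_Icc hs).antisymm fun m hm ↦ ?_
  have hsub : Icc (a : ℝ) b ⊆ convexHull ℝ (L '' s) := by
    calc Icc (a : ℝ) b ⊆ uIcc (a : ℝ) b := Icc_subset_uIcc
      _ = convexHull ℝ {L p, L q} := by rw [convexHull_pair, segment_eq_uIcc, hpa, hqb]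
      _ ⊆ convexHull ℝ (L '' s) :=
        convexHull_mono (pair_subset (mem_image_of_mem L hp) (mem_image_of_mem L hq))
  show (m : ℝ) ∈ L '' convexHull ℝ s
  rw [L.image_convexHull]
  exact hsub ⟨by exact_mod_cast hm.1, by exact_mod_cast hm.2⟩

lemma integerLevels_convexHull_subset_Ioo (hint : ∀ q ∈ s, ∃ k : ℤ, L q = k)
    (hs : ∀ q ∈ s, a < L q ∧ L q < b) : integerLevels L (convexHull ℝ s) ⊆ Ioo a b := by
  have hs' : ∀ q ∈ s, ((a + 1 : ℤ) : ℝ) ≤ L q ∧ L q ≤ ((b - 1 : ℤ) : ℝ) := by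
    intro q hq
    obtain ⟨k, hk⟩ := hint q hq
    have hakb := hs q hq
    rw [hk] at hakb ⊢
    have hak : a < k := by exact_mod_cast hakb.1
    have hkb : k < b := by exact_mod_cast hakb.2
    exact ⟨by exact_mod_cast hak, by exact_mod_cast Int.le_sub_one_of_lt hkb⟩
  exact (integerLevels_convexHull_subset_Icc hs').trans fun m ⟨h1, h2⟩ ↦ ⟨by omega, by omega⟩

end IntegerLevels

def wvₗ (v : ℤ × ℤ) : ℝ × ℝ →ₗ[ℝ] ℝ where
  toFun := wv v
  map_add' p q := by simp only [wv, Prod.fst_add, Prod.snd_add]; ring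
  map_smul' c p := by
    simp only [wv, Prod.smul_fst, Prod.smul_snd, smul_eq_mul, RingHom.id_apply]; ring

lemma exists_wv_eq_intCast (v : ℤ × ℤ) {p : ℝ × ℝ} (hp : ∃ a b : ℤ, p = ((a : ℝ), (b : ℝ))) :
    ∃ k : ℤ, wv v p = k := by
  obtain ⟨a, b, rfl⟩ := hp
  exact ⟨v.1 * b - v.2 * a, by simp [wv]⟩

lemma ne_of_mem_peel {P : Set (ℝ × ℝ)} {p q : ℝ × ℝ} (hq : q ∈ peel P)
    (hp : p ∈ (convexHull ℝ P).extremePoints ℝ) : q ≠ p :=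
  fun h ↦ hq.2 (h ▸ hp)

theorem inactive_direction_loses_two_lines_general (P : Set (ℝ × ℝ))
    (hPint : ∀ p ∈ P, ∃ a b : ℤ, p = ((a : ℝ), (b : ℝ))) (hcard : 2 ≤ P.ncard)
    (v : ℤ × ℤ)
    (hmax : ∃! p, p ∈ P ∧ ∀ q ∈ P, wv v q ≤ wv v p)
    (hmin : ∃! p, p ∈ P ∧ ∀ q ∈ P, wv v p ≤ wv v q) :
    {m : ℤ | ∃ q ∈ convexHull ℝ (peel P), wv v q = (m : ℝ)}.ncard + 2 ≤
      {m : ℤ | ∃ q ∈ convexHull ℝ P, wv v q = (m : ℝ)}.ncard := by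
  have hint : ∀ q ∈ P, ∃ k : ℤ, wv v q = k := fun q hq ↦ exists_wv_eq_intCast v (hPint q hq)
  obtain ⟨pmax, hpmax, hle_max, hlt_max⟩ := hmax.exists_mem_forall_le_forall_ne_lt
  obtain ⟨pmin, hpmin, hle_min, hlt_min⟩ := hmin.exists_mem_forall_le_forall_ne_lt (β := ℝᵒᵈ)
  obtain ⟨M, hM⟩ := hint pmax hpmax
  obtain ⟨m, hm⟩ := hint pmin hpmin
  have hmM : m < M := by
    obtain ⟨q, hq, hqmax⟩ := exists_ne_of_one_lt_ncard hcard pmax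
    have hmin_le : wv v pmin ≤ wv v q := hle_min q hq
    have h := hmin_le.trans_lt (hlt_max q hq hqmax)
    rw [hm, hM] at h
    exact_mod_cast h
  have hext_max := mem_extremePoints_convexHull_of_forall_ne_lt (L := wvₗ v) hpmax hlt_max
  have hext_min := mem_extremePoints_convexHull_of_forall_ne_gt (L := wvₗ v) hpmin hlt_min
  have hpeel : ∀ q ∈ peel P, (m : ℝ) < wv v q ∧ wv v q < M := fun q hq ↦ by
    rw [← hm, ← hM]
    exact ⟨hlt_min q hq.1 (ne_of_mem_peel hq hext_min), hlt_max q hq.1 (ne_of_mem_peel hq hext_max)⟩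
  change (integerLevels (wvₗ v) (convexHull ℝ (peel P))).ncard + 2 ≤
    (integerLevels (wvₗ v) (convexHull ℝ P)).ncard
  rw [integerLevels_convexHull_eq_Icc (L := wvₗ v) hpmin hpmax hm hM
    fun q hq ↦ ⟨hm ▸ hle_min q hq, hM ▸ hle_max q hq⟩]
  calc _ ≤ (Ioo m M).ncard + 2 := Nat.add_le_add_right (ncard_le_ncard
          (integerLevels_convexHull_subset_Ioo (L := wvₗ v) (fun q hq ↦ hint q hq.1) hpeel)) 2
    _ = (Icc m M).ncard := by
        simp only [← Finset.coe_Ioo, ← Finset.coe_Icc, ncard_coe_finset, Int.card_Ioo, Int.card_Icc]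
        omega

/-- If `P` is a finite set of integer points with `|P| ≥ 2` on which `w_v` has a
unique maximizer and a unique minimizer, then peeling decreases by at least two
the number of integers `m` realized as `w_v`-values on the convex hull
(i.e., at least two lines of direction `v` through integer points stop meeting
the hull). -/
theorem inactive_direction_loses_two_lines (P : Set (ℝ × ℝ)) (hP : P.Finite)
    (hPint : ∀ p ∈ P, ∃ a b : ℤ, p = ((a : ℝ), (b : ℝ))) (hcard : 2 ≤ P.ncard)
    (v : ℤ × ℤ) (hv : v ≠ 0)
    (hmax : ∃! p, p ∈ P ∧ ∀ q ∈ P, wv v q ≤ wv v p)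
    (hmin : ∃! p, p ∈ P ∧ ∀ q ∈ P, wv v p ≤ wv v q) :
    {m : ℤ | ∃ q ∈ convexHull ℝ (peel P), wv v q = (m : ℝ)}.ncard + 2 ≤
      {m : ℤ | ∃ q ∈ convexHull ℝ P, wv v q = (m : ℝ)}.ncard :=
  inactive_direction_loses_two_lines_general P hPint hcard v hmax hmin
end

section
/- Let n > 10 and μ < n/4 be positive integers, and let v ∈ V_μ. In the peeling process on G_n with iterates P_0 = G_n and P_{i+1} = peel(P_i), the number of indices i with P_i ≠ ∅ for which w_v attains its maximum over P_i at a unique point of P_i and also attains its minimum over P_i at a unique point of P_i is at most 2·n·μ. -/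
/-- The set of primitive integer vectors `(x, y)` with `0 ≤ y < x ≤ μ`. -/
def Vset (μ : ℤ) : Set (ℤ × ℤ) :=
  {v | 0 ≤ v.2 ∧ v.2 < v.1 ∧ v.1 ≤ μ ∧ Int.gcd v.1 v.2 = 1}

/-- `wv v` as a linear map. -/
noncomputable def Wmap (v : ℤ × ℤ) : (ℝ × ℝ) →ₗ[ℝ] ℝ :=
  (v.1 : ℝ) • LinearMap.snd ℝ ℝ ℝ - (v.2 : ℝ) • LinearMap.fst ℝ ℝ ℝ

lemma wv_eq_Wmap (v : ℤ × ℤ) (p : ℝ × ℝ) : wv v p = Wmap v p := by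
  simp [wv, Wmap]

/-- If `p` is the strict maximizer of `wv v` on a finite set, then any point of
the convex hull where `wv v` is at least `wv v p` must be `p` itself. -/
lemma eq_of_max_hull (v : ℤ × ℤ) (s : Finset (ℝ × ℝ)) (p : ℝ × ℝ) (hp : p ∈ s)
    (hstrict : ∀ q ∈ s, q ≠ p → wv v q < wv v p) :
    ∀ x ∈ convexHull ℝ (s : Set (ℝ × ℝ)), wv v p ≤ wv v x → x = p := by
  intro x hx hge
  rw [Finset.convexHull_eq] at hx
  obtain ⟨w, hw0, hw1, hwx⟩ := hx
  rw [Finset.centerMass_eq_of_sum_1 _ _ hw1] at hwx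
  have hle : ∀ q ∈ s, wv v q ≤ wv v p := by
    intro q hq
    rcases eq_or_ne q p with rfl | h
    · exact le_refl _
    · exact (hstrict q hq h).le
  have hWx : wv v x = ∑ y ∈ s, w y * wv v y := by
    rw [wv_eq_Wmap, ← hwx, map_sum]
    simp [wv_eq_Wmap, smul_eq_mul]
  have hsum : ∑ y ∈ s, w y * (wv v p - wv v y) ≤ 0 := by
    have : ∑ y ∈ s, w y * (wv v p - wv v y) = wv v p - wv v x := by
      rw [hWx]
      simp only [mul_sub, Finset.sum_sub_distrib, ← Finset.sum_mul, hw1, one_mul]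
    rw [this]; linarith
  have hzero : ∀ y ∈ s, w y * (wv v p - wv v y) = 0 := by
    have hnn : ∀ y ∈ s, 0 ≤ w y * (wv v p - wv v y) := fun y hy =>
      mul_nonneg (hw0 y hy) (by linarith [hle y hy])
    exact (Finset.sum_eq_zero_iff_of_nonneg hnn).1 (le_antisymm hsum (Finset.sum_nonneg hnn))
  have hwy : ∀ y ∈ s, y ≠ p → w y = 0 := by
    intro y hy hyp
    have h1 := hzero y hy
    have h2 := hstrict y hy hyp
    rcases mul_eq_zero.1 h1 with h | h
    · exact h
    · exfalso; linarith
  have hxp : x = w p • p := by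
    rw [← hwx]
    rw [Finset.sum_eq_single p]
    · simp
    · intro y hy hyp; rw [hwy y hy hyp]; simp
    · intro h; exact absurd hp h
  have hwp : w p = 1 := by
    rw [← hw1, Finset.sum_eq_single p]
    · intro y hy hyp; exact hwy y hy hyp
    · intro h; exact absurd hp h
  rw [hxp, hwp, one_smul]

/-- The unique maximizer of `wv v` on a finite set is an extreme point of the
convex hull. -/
lemma extreme_of_unique_max (v : ℤ × ℤ) (s : Finset (ℝ × ℝ)) (p : ℝ × ℝ) (hp : p ∈ s)
    (hstrict : ∀ q ∈ s, q ≠ p → wv v q < wv v p) :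
    p ∈ (convexHull ℝ (s : Set (ℝ × ℝ))).extremePoints ℝ := by
  have hle : ∀ q ∈ s, wv v q ≤ wv v p := by
    intro q hq
    rcases eq_or_ne q p with rfl | h
    · exact le_refl _
    · exact (hstrict q hq h).le
  have hhull : ∀ x ∈ convexHull ℝ (s : Set (ℝ × ℝ)), wv v x ≤ wv v p := by
    intro x hx
    have hconv : Convex ℝ {y : ℝ × ℝ | Wmap v y ≤ wv v p} :=
      convex_halfSpace_le (Wmap v).isLinear _
    have hsub : (s : Set (ℝ × ℝ)) ⊆ {y : ℝ × ℝ | Wmap v y ≤ wv v p} := by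
      intro q hq; simpa [← wv_eq_Wmap] using hle q hq
    have := convexHull_min hsub hconv hx
    simpa [← wv_eq_Wmap] using this
  rw [mem_extremePoints]
  refine ⟨subset_convexHull ℝ _ hp, fun x₁ hx₁ x₂ hx₂ hseg => ?_⟩
  obtain ⟨a, b, ha, hb, hab, habp⟩ := hseg
  have hW : a * wv v x₁ + b * wv v x₂ = wv v p := by
    rw [← habp]
    simp [wv_eq_Wmap, map_add, map_smul, smul_eq_mul]
  have h1 := hhull x₁ hx₁
  have h2 := hhull x₂ hx₂
  have hPP : a * wv v p + b * wv v p = wv v p := by rw [← add_mul, hab, one_mul]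
  have e1 : wv v x₁ = wv v p := by nlinarith [mul_le_mul_of_nonneg_left h2 hb.le]
  have e2 : wv v x₂ = wv v p := by nlinarith [mul_le_mul_of_nonneg_left h1 ha.le]
  exact ⟨eq_of_max_hull v s p hp hstrict x₁ hx₁ e1.ge,
    eq_of_max_hull v s p hp hstrict x₂ hx₂ e2.ge⟩

lemma main_aux (n μ : ℕ) (hn : 10 < n) (hμpos : 0 < μ)
    (v : ℤ × ℤ) (hv : v ∈ Vset (μ : ℤ)) (P : ℕ → Set (ℝ × ℝ))
    (hP : ∀ i, P i = peel^[i] (grid n)) :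
    {i : ℕ | P i ≠ ∅ ∧
      (∃! p, p ∈ P i ∧ ∀ q ∈ P i, wv v q ≤ wv v p) ∧
      (∃! p, p ∈ P i ∧ ∀ q ∈ P i, wv v p ≤ wv v q)}.ncard
      ≤ 2 * n * μ := by
  obtain ⟨hv0, hv1, hv2, -⟩ := hv
  have hgridfin : (grid n).Finite := by
    have hsub : grid n ⊆ (fun q : ℕ × ℕ => ((q.1 : ℝ), (q.2 : ℝ))) ''
        (Set.Icc 1 n ×ˢ Set.Icc 1 n) := by
      rintro p ⟨a, b, ha1, ha2, hb1, hb2, rfl⟩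
      exact ⟨(a, b), ⟨⟨ha1, ha2⟩, hb1, hb2⟩, rfl⟩
    exact (((Set.finite_Icc 1 n).prod (Set.finite_Icc 1 n)).image _).subset hsub
  have hPsucc : ∀ i, P (i + 1) = peel (P i) := by
    intro i; rw [hP, hP, Function.iterate_succ_apply']
  have hPsub : ∀ i, P (i + 1) ⊆ P i := by
    intro i; rw [hPsucc]; exact Set.diff_subset
  have hPmono : ∀ i j, i ≤ j → P j ⊆ P i := by
    intro i j hij
    induction j, hij using Nat.le_induction with
    | base => exact le_refl _
    | succ j hij ih => exact (hPsub j).trans ih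
  have hPgrid : ∀ i, P i ⊆ grid n := by
    intro i
    have := hPmono 0 i (Nat.zero_le i)
    rwa [hP 0, Function.iterate_zero_apply] at this
  have hPfin : ∀ i, (P i).Finite := fun i => hgridfin.subset (hPgrid i)
  -- integer values of wv on the grid, with bounds
  have hint : ∀ p ∈ grid n, ∃ k : ℤ, wv v p = (k : ℝ) ∧
      1 - (μ : ℤ) * n ≤ k ∧ k ≤ (μ : ℤ) * n := by
    rintro p ⟨a, b, ha1, ha2, hb1, hb2, rfl⟩
    refine ⟨v.1 * b - v.2 * a, by push_cast [wv]; ring, ?_, ?_⟩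
    · have hA : v.2 * (a : ℤ) ≤ (μ : ℤ) * n :=
        mul_le_mul (by omega) (by exact_mod_cast ha2) (by positivity) (by positivity)
      have hB : (1 : ℤ) * 1 ≤ v.1 * (b : ℤ) :=
        mul_le_mul (by omega) (by exact_mod_cast hb1) one_pos.le (by omega)
      linarith
    · have hA : v.1 * (b : ℤ) ≤ (μ : ℤ) * n :=
        mul_le_mul hv2 (by exact_mod_cast hb2) (by positivity) (by positivity)
      have hB : (0 : ℤ) ≤ v.2 * (a : ℤ) := mul_nonneg hv0 (by positivity)
      linarith
  set S := {i : ℕ | P i ≠ ∅ ∧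
      (∃! p, p ∈ P i ∧ ∀ q ∈ P i, wv v q ≤ wv v p) ∧
      (∃! p, p ∈ P i ∧ ∀ q ∈ P i, wv v p ≤ wv v q)} with hS
  set r : ℕ → ℝ := fun i => sSup (wv v '' P i) with hr
  set f : ℕ → ℤ := fun i => ⌊r i⌋ with hf
  -- the sup is attained and is the value at the unique maximizer
  have hmem_r : ∀ i, (P i).Nonempty → r i ∈ wv v '' P i := fun i hne =>
    Set.Nonempty.csSup_mem (hne.image _) ((hPfin i).image _)
  have hle_r : ∀ i, ∀ q ∈ P i, wv v q ≤ r i := fun i q hq =>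
    le_csSup ((hPfin i).image _).bddAbove ⟨q, hq, rfl⟩
  -- representation of f i on S
  have hrep : ∀ i ∈ S, ∃ k : ℤ, r i = (k : ℝ) ∧ f i = k ∧
      1 - (μ : ℤ) * n ≤ k ∧ k ≤ (μ : ℤ) * n := by
    intro i hi
    obtain ⟨hne, -, -⟩ := hi
    obtain ⟨q, hq, hqeq⟩ := hmem_r i (Set.nonempty_iff_ne_empty.2 hne)
    obtain ⟨k, hk, hk1, hk2⟩ := hint q (hPgrid i hq)
    exact ⟨k, by rw [← hqeq, hk], by rw [hf]; simp only [← hqeq, hk, Int.floor_intCast],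
      hk1, hk2⟩
  -- strict decrease of r along S
  have hkey : ∀ i ∈ S, ∀ j ∈ S, i < j → r j < r i := by
    intro i hi j hj hij
    obtain ⟨hne, hmax, -⟩ := hi
    obtain ⟨hnej, -, -⟩ := hj
    obtain ⟨p, ⟨hpmem, hpmax⟩, huniq⟩ := hmax
    have hstrict : ∀ q ∈ P i, q ≠ p → wv v q < wv v p := by
      intro q hq hqp
      rcases lt_or_eq_of_le (hpmax q hq) with h | h
      · exact h
      · exact absurd (huniq q ⟨hq, fun x hx => h ▸ hpmax x hx⟩) hqp
    -- r i = wv v p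
    have hri : r i = wv v p := by
      obtain ⟨q, hq, hqeq⟩ := hmem_r i (Set.nonempty_iff_ne_empty.2 hne)
      exact le_antisymm (hqeq ▸ hpmax q hq) (hle_r i p hpmem)
    -- p is removed at the next step
    have hpext : p ∈ (convexHull ℝ (P i)).extremePoints ℝ := by
      have hcoe : ((hPfin i).toFinset : Set (ℝ × ℝ)) = P i := (hPfin i).coe_toFinset
      have := extreme_of_unique_max v (hPfin i).toFinset p
        (by rw [← Set.Finite.mem_toFinset (hPfin i)] at hpmem; exact hpmem)
        (by intro q hq; rw [Set.Finite.mem_toFinset] at hq; exact hstrict q hq)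
      rwa [hcoe] at this
    have hpnot : p ∉ P (i + 1) := by
      rw [hPsucc]
      intro hmem
      exact hmem.2 hpext
    obtain ⟨q', hq'mem, hq'eq⟩ := hmem_r j (Set.nonempty_iff_ne_empty.2 hnej)
    have hq'i1 : q' ∈ P (i + 1) := hPmono (i + 1) j (by omega) hq'mem
    have hq'ne : q' ≠ p := fun h => hpnot (h ▸ hq'i1)
    have : wv v q' < wv v p := hstrict q' (hPsub i hq'i1) hq'ne
    rw [← hq'eq, hri]
    exact this
  -- f is injective on S and maps into an interval of size 2nμ
  have hmaps : ∀ i ∈ S, f i ∈ Set.Icc (1 - (μ : ℤ) * n) ((μ : ℤ) * n) := by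
    intro i hi
    obtain ⟨k, -, hk2, hk3, hk4⟩ := hrep i hi
    rw [hk2]; exact ⟨hk3, hk4⟩
  have hinj : Set.InjOn f S := by
    intro i hi j hj hij
    by_contra hne
    rcases Ne.lt_or_gt hne with h | h
    · obtain ⟨ki, hki, hki2, -, -⟩ := hrep i hi
      obtain ⟨kj, hkj, hkj2, -, -⟩ := hrep j hj
      have := hkey i hi j hj h
      rw [hki, hkj] at this
      have : kj < ki := by exact_mod_cast this
      omega
    · obtain ⟨ki, hki, hki2, -, -⟩ := hrep i hi
      obtain ⟨kj, hkj, hkj2, -, -⟩ := hrep j hj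
      have := hkey j hj i hi h
      rw [hki, hkj] at this
      have : ki < kj := by exact_mod_cast this
      omega
  have hfinIcc : (Set.Icc (1 - (μ : ℤ) * n) ((μ : ℤ) * n)).Finite := Set.finite_Icc _ _
  have hcard : (Set.Icc (1 - (μ : ℤ) * n) ((μ : ℤ) * n)).ncard = 2 * n * μ := by
    rw [← Finset.coe_Icc, Set.ncard_coe_finset, Int.card_Icc]
    have : (μ : ℤ) * n + 1 - (1 - (μ : ℤ) * n) = ((2 * n * μ : ℕ) : ℤ) := by
      push_cast; ring
    rw [this, Int.toNat_natCast]
  calc S.ncard ≤ (Set.Icc (1 - (μ : ℤ) * n) ((μ : ℤ) * n)).ncard :=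
        Set.ncard_le_ncard_of_injOn f hmaps hinj hfinIcc
    _ = 2 * n * μ := hcard

/-- In the peeling process on `G_n`, a direction `v ∈ V_μ` can be inactive
(unique maximizer and unique minimizer of `w_v` on the current layer) in at
most `2 n μ` iterations. -/
theorem inactive_iterations_upper_bound (n μ : ℕ) (hn : 10 < n) (hμpos : 0 < μ)
    (hμ : 4 * μ < n) (v : ℤ × ℤ) (hv : v ∈ Vset (μ : ℤ)) :
    {i : ℕ | peel^[i] (grid n) ≠ ∅ ∧
      (∃! p, p ∈ peel^[i] (grid n) ∧ ∀ q ∈ peel^[i] (grid n), wv v q ≤ wv v p) ∧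
      (∃! p, p ∈ peel^[i] (grid n) ∧ ∀ q ∈ peel^[i] (grid n), wv v p ≤ wv v q)}.ncard
      ≤ 2 * n * μ :=
  main_aux n μ hn hμpos v hv (fun i => peel^[i] (grid n)) (fun _ => rfl)
end

section
/- Let k be a positive integer and run the peeling process on M_k, with iterates Q_0 = M_k, Q_{i+1} = peel(Q_i), and layers C_{i+1} = extremePoints ℝ (convexHull ℝ Q_i). For every i with Q_i ≠ ∅, there exists j ∈ {1,…,k} such that every point p of the layer C_{i+1} satisfies max(|p₁|, |p₂|) = 3^j / 2; that is, each convex layer of M_k is contained in the boundary of one of the squares S_j. -/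
/-- The set `M_k` of the `4k²` intersection points of the `4k` lines extending
the sides of the concentric squares `S_j = [−3^j/2, 3^j/2]²`, `1 ≤ j ≤ k`. -/
def Mset (k : ℕ) : Set (ℝ × ℝ) :=
  {p | ∃ (ε δ : ℝ) (i j : ℕ), (ε = 1 ∨ ε = -1) ∧ (δ = 1 ∨ δ = -1) ∧
    1 ≤ i ∧ i ≤ k ∧ 1 ≤ j ∧ j ≤ k ∧ p = (ε * 3 ^ i / 2, δ * 3 ^ j / 2)}

open Set

section ExtremePoints

variable {E : Type*} [AddCommGroup E] [Module ℝ E] {s : Set E} {p : E}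

theorem mem_extremePoints_convexHull_of_forall_lt_s11 (l : E →ₗ[ℝ] ℝ) (hp : p ∈ s)
    (hlt : ∀ q ∈ s, q ≠ p → l q < l p) : p ∈ (convexHull ℝ s).extremePoints ℝ := by
  have hconv : Convex ℝ (insert p {x | l x < l p}) := by
    refine convex_iff_openSegment_subset.2 fun x hx y hy z hz => ?_
    obtain ⟨a, b, ha, hb, hab, rfl⟩ := hz
    obtain rfl : a = 1 - b := by linarith
    rcases hx with rfl | hx <;> rcases hy with rfl | hy
    · exact .inl (by rw [← add_smul, sub_add_cancel, one_smul])
    all_goals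
      right
      simp only [mem_ofPred_eq, map_add, map_smul, smul_eq_mul] at *
      nlinarith
  have hhull : convexHull ℝ s ⊆ insert p {x | l x < l p} :=
    convexHull_min (fun q hq => (eq_or_ne q p).imp id (hlt q hq)) hconv
  have hsdiff : convexHull ℝ s \ {p} = convexHull ℝ s ∩ {x | l x < l p} := by
    ext x
    constructor
    · rintro ⟨hx, hxp⟩
      exact ⟨hx, (hhull hx).resolve_left hxp⟩
    · rintro ⟨hx, hlx⟩
      exact ⟨hx, fun h => (lt_irrefl (l p)) (h ▸ hlx)⟩
  rw [(convex_convexHull ℝ s).mem_extremePoints_iff_convex_sdiff, hsdiff]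
  exact ⟨subset_convexHull ℝ s hp,
    (convex_convexHull ℝ s).inter (convex_halfSpace_lt l.isLinear _)⟩

theorem QuadraticMap.PosDef.mem_extremePoints_convexHull_of_isMaxOn {Q : QuadraticForm ℝ E}
    (hQ : Q.PosDef) (hp : p ∈ s) (hmax : IsMaxOn Q s p) :
    p ∈ (convexHull ℝ s).extremePoints ℝ := by
  refine mem_extremePoints_convexHull_of_forall_lt_s11 (Q.polarBilin p) hp fun q hq hqp => ?_
  have hpolar : Q.polarBilin p p - Q.polarBilin p q = Q p - Q q + Q (p - q) := by
    have hneg := Q.polar_neg_right p q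
    rw [QuadraticMap.polar, QuadraticMap.map_neg, ← sub_eq_add_neg] at hneg
    rw [QuadraticMap.polarBilin_apply_apply, QuadraticMap.polarBilin_apply_apply,
      QuadraticMap.polar_self, two_nsmul]
    linarith
  linarith [hQ (p - q) (sub_ne_zero.2 hqp.symm), isMaxOn_iff.1 hmax q hq]

end ExtremePoints

theorem Convex.mk_mem_of_abs_snd_le {C : Set (ℝ × ℝ)} (hC : Convex ℝ C) {x y Y : ℝ}
    (hup : (x, Y) ∈ C) (hdown : (x, -Y) ∈ C) (hy : |y| ≤ Y) : (x, y) ∈ C := by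
  refine hC.segment_subset hdown hup ?_
  rw [← Prod.image_mk_segment_right, segment_eq_Icc (by linarith [abs_nonneg y])]
  exact ⟨y, abs_le.1 hy, rfl⟩

theorem Convex.mk_mem_of_abs_fst_le {C : Set (ℝ × ℝ)} (hC : Convex ℝ C) {x y X : ℝ}
    (hup : (X, y) ∈ C) (hdown : (-X, y) ∈ C) (hx : |x| ≤ X) : (x, y) ∈ C := by
  refine hC.segment_subset hdown hup ?_
  rw [← Prod.image_mk_segment_left, segment_eq_Icc (by linarith [abs_nonneg x])]
  exact ⟨x, abs_le.1 hx, rfl⟩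

def octagon (M R : ℝ) : Set (ℝ × ℝ) :=
  {p | |p.1| = M ∧ |p.2| = R ∨ |p.1| = R ∧ |p.2| = M}

theorem max_abs_eq_of_mem_octagon {M R : ℝ} {p : ℝ × ℝ} (hRM : R ≤ M) (hp : p ∈ octagon M R) :
    max |p.1| |p.2| = M := by
  rcases hp with ⟨h₁, h₂⟩ | ⟨h₁, h₂⟩ <;> simp [h₁, h₂, hRM]

theorem extremePoints_convexHull_octagon (M R : ℝ) :
    (convexHull ℝ (octagon M R)).extremePoints ℝ = octagon M R := by
  refine extremePoints_convexHull_subset.antisymm fun p hp => ?_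
  let Q : QuadraticForm ℝ (ℝ × ℝ) :=
    ((1 + |p.1|) • QuadraticMap.sq).prod ((1 + |p.2|) • QuadraticMap.sq)
  have hQ : ∀ q : ℝ × ℝ, Q q = (1 + |p.1|) * |q.1| ^ 2 + (1 + |p.2|) * |q.2| ^ 2 := by
    intro q
    simp [Q, sq]
  have hsq : QuadraticMap.PosDef (QuadraticMap.sq : QuadraticMap ℝ ℝ ℝ) :=
    fun x hx => mul_self_pos.2 hx
  have hQpos : Q.PosDef := (hsq.smul (by positivity : (0:ℝ) < 1 + |p.1|)).prod
    (hsq.smul (by positivity : (0:ℝ) < 1 + |p.2|))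
  refine hQpos.mem_extremePoints_convexHull_of_isMaxOn hp fun q hq => ?_
  have hM : 0 ≤ M := by rcases hp with ⟨h, -⟩ | ⟨-, h⟩ <;> exact h ▸ abs_nonneg _
  have hR : 0 ≤ R := by rcases hp with ⟨-, h⟩ | ⟨h, -⟩ <;> exact h ▸ abs_nonneg _
  have hswap : (1 + M) * R ^ 2 + (1 + R) * M ^ 2 ≤ (1 + M) * M ^ 2 + (1 + R) * R ^ 2 := by
    nlinarith [mul_nonneg (add_nonneg hM hR) (sq_nonneg (M - R))]
  change Q q ≤ Q p
  rw [hQ, hQ]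
  rcases hp with ⟨h₁, h₂⟩ | ⟨h₁, h₂⟩ <;> rcases hq with ⟨h₃, h₄⟩ | ⟨h₃, h₄⟩ <;>
    rw [h₁, h₂, h₃, h₄] <;> linarith

theorem mk_mem_convexHull_octagon {M R x y : ℝ} (hR : 0 ≤ R) (hRM : R ≤ M)
    (h : |x| = M ∧ |y| ≤ R ∨ |x| ≤ R ∧ |y| = M ∨ 2 * |x| ≤ M + R ∧ 2 * |y| ≤ M + R) :
    (x, y) ∈ convexHull ℝ (octagon M R) := by
  have hC := convex_convexHull ℝ (octagon M R)
  have hvert : ∀ {u v : ℝ}, (|u| = M ∧ |v| = R ∨ |u| = R ∧ |v| = M) →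
      (u, v) ∈ convexHull ℝ (octagon M R) := fun h => subset_convexHull ℝ _ h
  have habsR : |-R| = R := by rw [abs_neg, abs_of_nonneg hR]
  rcases h with ⟨hx, hy⟩ | ⟨hx, hy⟩ | ⟨hx, hy⟩
  · exact hC.mk_mem_of_abs_snd_le (hvert (.inl ⟨hx, abs_of_nonneg hR⟩))
      (hvert (.inl ⟨hx, habsR⟩)) hy
  · exact hC.mk_mem_of_abs_fst_le (hvert (.inr ⟨abs_of_nonneg hR, hy⟩))
      (hvert (.inr ⟨habsR, hy⟩)) hx
  -- the corners `(±c, ±c)` of the central square are midpoints of the diagonal edges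
  set c := (M + R) / 2 with hc
  have hcorner : ∀ σ τ : ℝ, |σ| = 1 → |τ| = 1 →
      (σ * c, τ * c) ∈ convexHull ℝ (octagon M R) := by
    intro σ τ hσ hτ
    have habs : ∀ {ρ A : ℝ}, |ρ| = 1 → 0 ≤ A → |ρ * A| = A := fun hρ hA => by
      rw [abs_mul, hρ, one_mul, abs_of_nonneg hA]
    have hM : 0 ≤ M := hR.trans hRM
    have h₁ := hvert (.inl ⟨habs hσ hM, habs hτ hR⟩)
    have h₂ := hvert (.inr ⟨habs hσ hR, habs hτ hM⟩)
    convert hC h₁ h₂ (by norm_num : (0 : ℝ) ≤ 1 / 2) (by norm_num : (0 : ℝ) ≤ 1 / 2) (by norm_num)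
      using 1
    ext <;> simp only [Prod.smul_mk, Prod.fst_add, Prod.snd_add, smul_eq_mul] <;> ring
  have hrow : ∀ τ : ℝ, |τ| = 1 → (x, τ * c) ∈ convexHull ℝ (octagon M R) := fun τ hτ =>
    hC.mk_mem_of_abs_fst_le (X := c) (by simpa using hcorner 1 τ abs_one hτ)
      (by simpa using hcorner (-1) τ (by norm_num) hτ) (by linarith)
  exact hC.mk_mem_of_abs_snd_le (Y := c) (by simpa using hrow 1 abs_one)
    (by simpa using hrow (-1) (by norm_num)) (by linarith)

def gridPoints (S : Set (ℕ × ℕ)) : Set (ℝ × ℝ) :=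
  {p | ∃ e ∈ S, |p.1| = 3 ^ e.1 / 2 ∧ |p.2| = 3 ^ e.2 / 2}

/-- The exponent pairs `(a, b)` with `(max a b, min a b) ≤ (m, r)` lexicographically: those still
present when the layer with `(max a b, min a b) = (m, r)` is about to be peeled. -/
def peelStage (m r : ℕ) : Set (ℕ × ℕ) :=
  {e | 1 ≤ e.1 ∧ 1 ≤ e.2 ∧ (max e.1 e.2 < m ∨ max e.1 e.2 = m ∧ min e.1 e.2 ≤ r)}

theorem gridPoints_mono {S T : Set (ℕ × ℕ)} (h : S ⊆ T) : gridPoints S ⊆ gridPoints T :=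
  fun _ ⟨e, he, hp⟩ => ⟨e, h he, hp⟩

theorem three_pow_div_two_injective : Function.Injective fun n : ℕ => (3 : ℝ) ^ n / 2 :=
  fun _ _ h => pow_right_injective₀ (by norm_num : (0 : ℝ) < 3) (by norm_num)
    ((div_left_inj' two_ne_zero).1 h)

theorem gridPoints_sdiff (S T : Set (ℕ × ℕ)) :
    gridPoints S \ gridPoints T = gridPoints (S \ T) := by
  ext p
  constructor
  · rintro ⟨⟨e, he, hp⟩, hpT⟩
    exact ⟨e, ⟨he, fun heT => hpT ⟨e, heT, hp⟩⟩, hp⟩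
  · rintro ⟨e, ⟨he, heT⟩, h₁, h₂⟩
    refine ⟨⟨e, he, h₁, h₂⟩, ?_⟩
    rintro ⟨e', he', h₁', h₂'⟩
    obtain rfl : e' = e := Prod.ext (three_pow_div_two_injective (h₁'.symm.trans h₁))
      (three_pow_div_two_injective (h₂'.symm.trans h₂))
    exact heT he'

theorem gridPoints_pair (m r : ℕ) :
    gridPoints {(m, r), (r, m)} = octagon (3 ^ m / 2) (3 ^ r / 2) := by
  ext p
  simp [gridPoints, octagon]

theorem exists_sign_mul_iff_abs_eq {x c : ℝ} (hc : 0 ≤ c) :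
    (∃ ε : ℝ, (ε = 1 ∨ ε = -1) ∧ x = ε * c) ↔ |x| = c := by
  rw [abs_eq hc]
  constructor
  · rintro ⟨ε, rfl | rfl, rfl⟩ <;> simp
  · rintro (h | h)
    exacts [⟨1, .inl rfl, by rw [h, one_mul]⟩, ⟨-1, .inr rfl, by rw [h, neg_one_mul]⟩]

theorem Mset_eq_gridPoints (k : ℕ) : Mset k = gridPoints (peelStage k k) := by
  ext ⟨x, y⟩
  simp only [Mset, gridPoints, peelStage, mem_ofPred_eq, Prod.mk.injEq, Prod.exists,
    ← exists_sign_mul_iff_abs_eq (by positivity : (0 : ℝ) ≤ 3 ^ _ / 2), mul_div_assoc]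
  constructor
  · rintro ⟨ε, δ, a, b, hε, hδ, ha, hak, hb, hbk, rfl, rfl⟩
    exact ⟨a, b, ⟨ha, hb, by omega⟩, ⟨ε, hε, rfl⟩, ⟨δ, hδ, rfl⟩⟩
  · rintro ⟨a, b, ⟨ha, hb, hab⟩, ⟨ε, hε, rfl⟩, ⟨δ, hδ, rfl⟩⟩
    exact ⟨ε, δ, a, b, hε, hδ, ha, by omega, hb, by omega, rfl, rfl⟩

theorem peelStage_zero (m : ℕ) : peelStage m 0 = peelStage (m - 1) (m - 1) := by
  ext e
  simp only [peelStage, mem_ofPred_eq]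
  omega

theorem peelStage_zero_zero : peelStage 0 0 = ∅ := by
  ext e
  simp only [peelStage, mem_ofPred_eq, mem_empty_iff_false, iff_false]
  omega

theorem peelStage_sdiff (m r : ℕ) :
    peelStage m r \ {(m, r), (r, m)} = peelStage m (r - 1) := by
  ext ⟨a, b⟩
  simp only [peelStage, mem_sdiff, mem_ofPred_eq, mem_insert_iff, mem_singleton_iff, Prod.mk.injEq]
  omega

theorem gridPoints_peelStage_subset_convexHull {m r : ℕ} (hrm : r ≤ m) :
    gridPoints (peelStage m r) ⊆ convexHull ℝ (octagon (3 ^ m / 2) (3 ^ r / 2)) := by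
  rintro ⟨x, y⟩ ⟨⟨a, b⟩, ⟨ha, hb, hab⟩, hx, hy⟩
  refine mk_mem_convexHull_octagon (by positivity) (by gcongr; norm_num) ?_
  dsimp only at hx hy
  rcases hab with hlt | hmax
  · have hbound : ∀ n, n < m → 2 * ((3 : ℝ) ^ n / 2) ≤ 3 ^ m / 2 + 3 ^ r / 2 := fun n hn => by
      have := pow_le_pow_right₀ (by norm_num : (1 : ℝ) ≤ 3) (Nat.succ_le_of_lt hn)
      rw [pow_succ] at this
      linarith [pow_pos (by norm_num : (0 : ℝ) < 3) r, pow_pos (by norm_num : (0 : ℝ) < 3) n]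
    exact .inr (.inr ⟨hx ▸ hbound a (by omega), hy ▸ hbound b (by omega)⟩)
  · obtain ⟨rfl, hbr⟩ | ⟨rfl, har⟩ : a = m ∧ b ≤ r ∨ b = m ∧ a ≤ r := by omega
    · exact .inl ⟨hx, hy ▸ by gcongr; norm_num⟩
    · exact .inr (.inl ⟨hx ▸ by gcongr; norm_num, hy⟩)

theorem extremePoints_convexHull_gridPoints_peelStage {m r : ℕ} (hr : 1 ≤ r) (hrm : r ≤ m) :
    (convexHull ℝ (gridPoints (peelStage m r))).extremePoints ℝ =
      gridPoints {(m, r), (r, m)} := by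
  have hlayer : {(m, r), (r, m)} ⊆ peelStage m r := by
    rintro e (rfl | rfl) <;> simp only [peelStage, mem_ofPred_eq] <;> omega
  have hhull : convexHull ℝ (gridPoints (peelStage m r)) =
      convexHull ℝ (gridPoints {(m, r), (r, m)}) :=
    (convexHull_min (gridPoints_pair m r ▸ gridPoints_peelStage_subset_convexHull hrm)
      (convex_convexHull ℝ _)).antisymm (convexHull_mono (gridPoints_mono hlayer))
  rw [hhull, gridPoints_pair, extremePoints_convexHull_octagon]

theorem peel_gridPoints_peelStage {m r : ℕ} (hr : 1 ≤ r) (hrm : r ≤ m) :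
    peel (gridPoints (peelStage m r)) = gridPoints (peelStage m (r - 1)) := by
  rw [peel, extremePoints_convexHull_gridPoints_peelStage hr hrm, gridPoints_sdiff,
    peelStage_sdiff]

theorem peel_iterate_Mset (k i : ℕ) :
    peel^[i] (Mset k) = ∅ ∨ ∃ m r, 1 ≤ r ∧ r ≤ m ∧ m ≤ k ∧
      peel^[i] (Mset k) = gridPoints (peelStage m r) := by
  have hempty : gridPoints (peelStage 0 0) = ∅ := by
    rw [peelStage_zero_zero]
    simp [gridPoints]
  induction i with
  | zero =>
    rw [Function.iterate_zero_apply, Mset_eq_gridPoints]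
    rcases Nat.eq_zero_or_pos k with rfl | hk
    exacts [.inl hempty, .inr ⟨k, k, hk, le_rfl, le_rfl, rfl⟩]
  | succ i ih =>
    rw [Function.iterate_succ_apply']
    obtain h | ⟨m, r, hr, hrm, hmk, h⟩ := ih
    · exact .inl (by rw [h, peel, empty_sdiff])
    rw [h, peel_gridPoints_peelStage hr hrm]
    rcases Nat.lt_or_ge 1 r with hr1 | hr1
    · exact .inr ⟨m, r - 1, by omega, by omega, hmk, rfl⟩
    obtain rfl : r = 1 := by omega
    rw [Nat.sub_self, peelStage_zero]
    rcases Nat.lt_or_ge 1 m with hm1 | hm1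
    · exact .inr ⟨m - 1, m - 1, by omega, le_rfl, by omega, rfl⟩
    obtain rfl : m = 1 := by omega
    exact .inl hempty

theorem layer_in_square_boundary_general (k : ℕ) (i : ℕ)
    (hne : peel^[i] (Mset k) ≠ ∅) :
    ∃ j : ℕ, 1 ≤ j ∧ j ≤ k ∧
      ∀ p ∈ (convexHull ℝ (peel^[i] (Mset k))).extremePoints ℝ,
        max |p.1| |p.2| = 3 ^ j / 2 := by
  obtain h | ⟨m, r, hr, hrm, hmk, h⟩ := peel_iterate_Mset k i
  · exact absurd h hne
  refine ⟨m, hr.trans hrm, hmk, fun p hp => ?_⟩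
  rw [h, extremePoints_convexHull_gridPoints_peelStage hr hrm, gridPoints_pair] at hp
  exact max_abs_eq_of_mem_octagon (by gcongr; norm_num) hp

/-- Each convex layer of the peeling process on `M_k` is contained in the
boundary of one of the squares `S_j`, i.e., all its points `p` satisfy
`max (|p₁|, |p₂|) = 3^j / 2`. -/
theorem layer_in_square_boundary (k : ℕ) (hk : 0 < k) (i : ℕ)
    (hne : peel^[i] (Mset k) ≠ ∅) :
    ∃ j : ℕ, 1 ≤ j ∧ j ≤ k ∧
      ∀ p ∈ (convexHull ℝ (peel^[i] (Mset k))).extremePoints ℝ,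
        max |p.1| |p.2| = 3 ^ j / 2 :=
  layer_in_square_boundary_general k i hne
end
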